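/- arXiv:2601.10711 — 6 statements merged into one kernel-verified Lean document; each statement's English description precedes it below -/
import Mathlib

section
/- Let g be a measurable symbol on ℂ, let P : L²(μ) → F² be the orthogonal projection onto the Fock space, and let U_g f = P(g f) on the domain D = {f ∈ L²(μ) : g f ∈ L²(μ)}. Then U_g extends to a bounded operator L²(μ) → F² if and only if multiplication by conj(g) is bounded from F² into L²(μ), i.e. there exists C with ∫ |g(z)|² |h(z)|² dμ(z) ≤ C ‖h‖²_{F²} for all h ∈ F². -/
open MeasureTheory Real NNReal ENNReal

/-- The Gaussian measure `dμ(z) = π⁻¹ e^{-|z|²} dA(z)` on `ℂ`. -/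
noncomputable def gaussMeasure : Measure ℂ :=
  (volume : Measure ℂ).withDensity
    (fun z => ENNReal.ofReal (Real.pi⁻¹ * Real.exp (-‖z‖ ^ 2)))

local notation "μ" => gaussMeasure

private lemma conj_mul_self' (z : ℂ) : (starRingEnd ℂ) z * z = ((‖z‖^2 : ℝ) : ℂ) := by
  rw [mul_comm, Complex.mul_conj]
  norm_cast
  rw [Complex.normSq_eq_norm_sq]

private lemma eLpNorm_two_sq {α} [MeasurableSpace α] (ν : Measure α) (f : α → ℂ) :
    (eLpNorm f 2 ν) ^ 2 = ∫⁻ z, (‖f z‖₊ : ℝ≥0∞) ^ 2 ∂ν := by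
  rw [eLpNorm_eq_lintegral_rpow_enorm_toReal two_ne_zero ENNReal.ofNat_ne_top]
  rw [show ((2:ℝ≥0∞).toReal) = (2:ℝ) by simp]
  rw [← ENNReal.rpow_natCast _ 2, ← ENNReal.rpow_mul]
  norm_num
  rfl

set_option maxHeartbeats 1000000 in
/-- `U_g f = P(g f)` on the natural domain extends to a bounded operator `L²(μ) → F²`
iff multiplication by `conj g` (equivalently `g`, in norm) is bounded from `F²` into
`L²(μ)`, i.e. `∫ |g|² |h|² dμ ≤ C ‖h‖²_{F²}` for all `h ∈ F²`.  Here `K` is the Fock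
space, realized as the subspace of `L²(μ)` of (a.e. classes of) entire functions, and
`P = K.orthogonalProjectionOnto`. -/
theorem stmt_10 (g : ℂ → ℂ) (hg : Measurable g)
    (K : Submodule ℂ (Lp ℂ 2 gaussMeasure)) [K.HasOrthogonalProjection]
    (hK : ∀ f : Lp ℂ 2 gaussMeasure,
      f ∈ K ↔ ∃ F : ℂ → ℂ, Differentiable ℂ F ∧ (f : ℂ → ℂ) =ᵐ[gaussMeasure] F) :
    (∃ C : ℝ, 0 ≤ C ∧ ∀ (f : ℂ → ℂ) (hf : MemLp f 2 gaussMeasure)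
        (hgf : MemLp (fun z => g z * f z) 2 gaussMeasure),
        ‖K.orthogonalProjectionOnto (hgf.toLp _)‖ ≤ C * ‖hf.toLp f‖) ↔
    (∃ C : ℝ≥0, ∀ h : ℂ → ℂ, Differentiable ℂ h → MemLp h 2 gaussMeasure →
        ∫⁻ z, ((‖g z‖₊ : ℝ≥0∞) * ‖h z‖₊) ^ 2 ∂gaussMeasure ≤
          C * ∫⁻ z, (‖h z‖₊ : ℝ≥0∞) ^ 2 ∂gaussMeasure) := by
  constructor
  · rintro ⟨C, hC0, hC⟩
    refine ⟨(⟨C, hC0⟩ : ℝ≥0) ^ 2, fun h hdiff hh => ?_⟩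
    have hmeas_h : Measurable h := hdiff.continuous.measurable
    set hL : Lp ℂ 2 μ := hh.toLp h with hLdef
    have hmem : hL ∈ K := (hK _).mpr ⟨h, hdiff, hh.coeFn_toLp⟩
    set F : ℂ → ℝ≥0∞ := fun z => ((‖g z‖₊ : ℝ≥0∞) * ‖h z‖₊) ^ 2 with hF
    have hFmeas : Measurable F := (hg.enorm.mul hmeas_h.enorm).pow_const 2
    set s : ℕ → Set ℂ := fun n => {z | ‖g z‖ ≤ (n : ℝ)} with hs
    have hsm : ∀ n, MeasurableSet (s n) := fun n => measurableSet_le hg.norm measurable_const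
    -- key bound for each n
    have key : ∀ n : ℕ, ∫⁻ z, (s n).indicator F z ∂μ ≤ ENNReal.ofReal (C ^ 2 * ‖hL‖ ^ 2) := by
      intro n
      set f : ℂ → ℂ := (s n).indicator (fun z => (starRingEnd ℂ) (g z) * h z) with hfdef
      have hfmeas : Measurable f :=
        ((continuous_star.measurable.comp hg).mul hmeas_h).indicator (hsm n)
      have hfmem : MemLp f 2 μ := by
        refine MemLp.of_le (hh.const_mul ((n : ℂ))) hfmeas.aestronglyMeasurable
          (Filter.Eventually.of_forall fun z => ?_)
        by_cases hz : z ∈ s n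
        · rw [hfdef, Set.indicator_of_mem hz]
          simp only [norm_mul, RCLike.norm_conj, Complex.norm_natCast]
          exact mul_le_mul_of_nonneg_right hz (norm_nonneg _)
        · rw [hfdef, Set.indicator_of_notMem hz]
          simp only [norm_zero, norm_mul, Complex.norm_natCast]
          positivity
      have hgfmem : MemLp (fun z => g z * f z) 2 μ := by
        refine MemLp.of_le (hh.const_mul ((n : ℂ) ^ 2)) ((hg.mul hfmeas).aestronglyMeasurable)
          (Filter.Eventually.of_forall fun z => ?_)
        by_cases hz : z ∈ s n
        · rw [hfdef, Set.indicator_of_mem hz]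
          simp only [norm_mul, RCLike.norm_conj, norm_pow, Complex.norm_natCast, ← mul_assoc]
          have : (0:ℝ) ≤ (n:ℝ) := Nat.cast_nonneg n
          have hgz : ‖g z‖ ≤ (n : ℝ) := hz
          have := mul_le_mul hgz hgz (norm_nonneg _) this
          nlinarith [norm_nonneg (h z), norm_nonneg (g z)]
        · rw [hfdef, Set.indicator_of_notMem hz]
          simp only [mul_zero, norm_zero, norm_mul, norm_pow, Complex.norm_natCast]
          positivity
      set φ : ℂ → ℝ := (s n).indicator (fun z => ‖g z‖ ^ 2 * ‖h z‖ ^ 2) with hφdef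
      have hφint : Integrable φ μ := by
        have hφeq : φ = fun z => ‖f z‖ ^ 2 := by
          funext z
          by_cases hz : z ∈ s n
          · rw [hφdef, hfdef, Set.indicator_of_mem hz, Set.indicator_of_mem hz]
            simp [norm_mul, mul_pow]
          · rw [hφdef, hfdef, Set.indicator_of_notMem hz, Set.indicator_of_notMem hz]
            simp
        rw [hφeq]
        exact hfmem.norm.integrable_sq
      have hφ0 : ∀ z, 0 ≤ φ z := fun z => Set.indicator_nonneg (fun y _ => by positivity) z
      set I : ℝ := ∫ z, φ z ∂μ with hIdef
      have hI0 : 0 ≤ I := integral_nonneg hφ0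
      -- inner product computations
      have hinner1 : (inner ℂ (hgfmem.toLp _) hL : ℂ) = ((I : ℝ) : ℂ) := by
        have step : (inner ℂ (hgfmem.toLp _) hL : ℂ) = ∫ z, ((φ z : ℝ) : ℂ) ∂μ := by
          rw [L2.inner_def]
          apply integral_congr_ae
          filter_upwards [hgfmem.coeFn_toLp, hh.coeFn_toLp] with z h1 h2
          rw [h1, h2, RCLike.inner_apply]
          by_cases hz : z ∈ s n
          · rw [hφdef, hfdef, Set.indicator_of_mem hz, Set.indicator_of_mem hz]
            simp only [map_mul, Complex.conj_conj]
            calc _ = ((starRingEnd ℂ) (g z) * g z) * ((starRingEnd ℂ) (h z) * h z) := by ring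
              _ = _ := by rw [conj_mul_self', conj_mul_self']; push_cast; ring
          · rw [hφdef, hfdef, Set.indicator_of_notMem hz, Set.indicator_of_notMem hz]
            simp
        rw [step]
        exact integral_ofReal
      have hinner2 : (inner ℂ (hfmem.toLp f) (hfmem.toLp f) : ℂ) = ((I : ℝ) : ℂ) := by
        have step : (inner ℂ (hfmem.toLp f) (hfmem.toLp f) : ℂ) = ∫ z, ((φ z : ℝ) : ℂ) ∂μ := by
          rw [L2.inner_def]
          apply integral_congr_ae
          filter_upwards [hfmem.coeFn_toLp] with z h1
          rw [h1, RCLike.inner_apply]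
          by_cases hz : z ∈ s n
          · rw [hφdef, hfdef, Set.indicator_of_mem hz, Set.indicator_of_mem hz]
            simp only [map_mul, Complex.conj_conj]
            calc _ = ((starRingEnd ℂ) (g z) * g z) * ((starRingEnd ℂ) (h z) * h z) := by ring
              _ = _ := by rw [conj_mul_self', conj_mul_self']; push_cast; ring
          · rw [hφdef, hfdef, Set.indicator_of_notMem hz, Set.indicator_of_notMem hz]
            simp
        rw [step]
        exact integral_ofReal
      have hnormf : ‖hfmem.toLp f‖ ^ 2 = I := by
        rw [← inner_self_eq_norm_sq (𝕜 := ℂ), hinner2]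
        simp
      -- projection step
      have hproj : (inner ℂ ((K.orthogonalProjectionOnto (hgfmem.toLp _) : K) : Lp ℂ 2 μ) hL : ℂ)
          = (inner ℂ (hgfmem.toLp (fun z => g z * f z)) hL : ℂ) := by
        have hh2 := Submodule.inner_orthogonalProjectionOnto_eq_of_mem_right (K := K)
          (⟨hL, hmem⟩ : K) (hgfmem.toLp _)
        rwa [Submodule.coe_inner] at hh2
      have hIle : I ≤ C ^ 2 * ‖hL‖ ^ 2 := by
        have h1 : I = RCLike.re ((inner ℂ ((K.orthogonalProjectionOnto (hgfmem.toLp _) : K) : Lp ℂ 2 μ) hL : ℂ)) := by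
          rw [hproj, hinner1]; simp
        have h2 : I ≤ ‖((K.orthogonalProjectionOnto (hgfmem.toLp _) : K) : Lp ℂ 2 μ)‖ * ‖hL‖ := by
          rw [h1]; exact re_inner_le_norm _ _
        have h3 : ‖((K.orthogonalProjectionOnto (hgfmem.toLp _) : K) : Lp ℂ 2 μ)‖
            ≤ C * ‖hfmem.toLp f‖ := hC f hfmem hgfmem
        have h4 : I ≤ C * ‖hfmem.toLp f‖ * ‖hL‖ :=
          h2.trans (mul_le_mul_of_nonneg_right h3 (norm_nonneg _))
        nlinarith [sq_nonneg (C * ‖hL‖ - ‖hfmem.toLp f‖), norm_nonneg (hfmem.toLp f),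
          norm_nonneg hL, sq_nonneg (‖hfmem.toLp f‖)]
      -- convert to lintegral
      have hof : ∫⁻ z, (s n).indicator F z ∂μ = ENNReal.ofReal I := by
        rw [hIdef, ofReal_integral_eq_lintegral_ofReal hφint
          (Filter.Eventually.of_forall hφ0)]
        apply lintegral_congr fun z => ?_
        by_cases hz : z ∈ s n
        · rw [hφdef, Set.indicator_of_mem hz, Set.indicator_of_mem hz]
          refine Eq.symm ?_
          show ENNReal.ofReal (‖g z‖ ^ 2 * ‖h z‖ ^ 2) = ((‖g z‖₊ : ℝ≥0∞) * ‖h z‖₊) ^ 2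
          rw [ENNReal.ofReal_mul (by positivity), ENNReal.ofReal_pow (norm_nonneg _),
            ENNReal.ofReal_pow (norm_nonneg _), ofReal_norm,
            ofReal_norm, enorm_eq_nnnorm, enorm_eq_nnnorm, mul_pow]
        · rw [hφdef, Set.indicator_of_notMem hz, Set.indicator_of_notMem hz]
          simp
      rw [hof]
      exact ENNReal.ofReal_le_ofReal hIle
    -- monotone convergence
    have hmono : Monotone (fun n : ℕ => (s n).indicator F) := by
      intro m n hmn z
      refine Set.indicator_le_indicator_of_subset (fun y hy => ?_) (fun _ => zero_le) z
      simp only [hs, Set.mem_setOf_eq] at hy ⊢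
      exact le_trans hy (Nat.cast_le.mpr hmn)
    have hsup : ∀ z, ⨆ n : ℕ, (s n).indicator F z = F z := by
      intro z
      apply le_antisymm
      · exact iSup_le fun n => Set.indicator_le_self _ _ z
      · obtain ⟨n, hn⟩ := exists_nat_ge ‖g z‖
        refine le_iSup_of_le n (le_of_eq ?_)
        exact (Set.indicator_of_mem (show z ∈ s n from hn) F).symm
    have hofnorm : ENNReal.ofReal (‖hL‖ ^ 2) = ∫⁻ z, (‖h z‖₊ : ℝ≥0∞) ^ 2 ∂μ := by
      rw [hLdef, Lp.norm_toLp, ← ENNReal.toReal_pow,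
        ENNReal.ofReal_toReal (by exact (pow_ne_top hh.2.ne)), eLpNorm_two_sq]
    calc ∫⁻ z, F z ∂μ = ∫⁻ z, ⨆ n : ℕ, (s n).indicator F z ∂μ :=
          lintegral_congr fun z => (hsup z).symm
      _ = ⨆ n : ℕ, ∫⁻ z, (s n).indicator F z ∂μ :=
          lintegral_iSup (fun n => hFmeas.indicator (hsm n)) hmono
      _ ≤ ENNReal.ofReal (C ^ 2 * ‖hL‖ ^ 2) := iSup_le key
      _ = ENNReal.ofReal (C ^ 2) * ENNReal.ofReal (‖hL‖ ^ 2) :=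
          ENNReal.ofReal_mul (by positivity)
      _ = (((⟨C, hC0⟩ : ℝ≥0) ^ 2 : ℝ≥0) : ℝ≥0∞) * ∫⁻ z, (‖h z‖₊ : ℝ≥0∞) ^ 2 ∂μ := by
          rw [hofnorm, ENNReal.ofReal_pow hC0, ENNReal.ofReal_eq_coe_nnreal hC0]
          congr 1
  · rintro ⟨C, hC⟩
    refine ⟨Real.sqrt C, Real.sqrt_nonneg _, fun f hf hgf => ?_⟩
    set u : Lp ℂ 2 μ := hgf.toLp _ with hu
    set p := K.orthogonalProjectionOnto u with hp
    obtain ⟨H, hHdiff, hp_ae⟩ := (hK (↑p)).mp p.2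
    have hH : MemLp H 2 μ := (Lp.memLp (↑p : Lp ℂ 2 μ)).ae_eq hp_ae
    have hHbound := hC H hHdiff hH
    -- W = conj g * H is in L²
    set W : ℂ → ℂ := fun z => (starRingEnd ℂ) (g z) * H z with hW
    have hWn : ∀ z, (‖W z‖₊ : ℝ≥0∞) = (‖g z‖₊ : ℝ≥0∞) * ‖H z‖₊ := by
      intro z; simp [hW, nnnorm_mul, RCLike.nnnorm_conj]
    have hWmeas : AEStronglyMeasurable W μ :=
      ((continuous_star.measurable.comp hg).mul hHdiff.continuous.measurable).aestronglyMeasurable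
    have hWsq : (eLpNorm W 2 μ) ^ 2 = ∫⁻ z, ((‖g z‖₊ : ℝ≥0∞) * ‖H z‖₊) ^ 2 ∂μ := by
      rw [eLpNorm_two_sq]
      exact lintegral_congr fun z => by rw [hWn]
    have hWmem : MemLp W 2 μ := by
      refine ⟨hWmeas, ?_⟩
      rw [lt_top_iff_ne_top]
      have h2 : eLpNorm W 2 μ ^ 2 ≠ ⊤ := by
        rw [hWsq]
        exact (hHbound.trans_lt (ENNReal.mul_lt_top coe_lt_top
          (by rw [← eLpNorm_two_sq]; exact pow_lt_top hH.2))).ne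
      simpa [ENNReal.pow_eq_top_iff] using h2
    set w : Lp ℂ 2 μ := hWmem.toLp W with hw
    have hpnorm : ‖(↑p : Lp ℂ 2 μ)‖ = (eLpNorm H 2 μ).toReal := by
      rw [Lp.norm_def, eLpNorm_congr_ae hp_ae]
    have hwnorm : ‖w‖ ≤ Real.sqrt C * ‖(↑p : Lp ℂ 2 μ)‖ := by
      have hsq : ‖w‖ ^ 2 ≤ (C : ℝ) * ‖(↑p : Lp ℂ 2 μ)‖ ^ 2 := by
        have h1 : (eLpNorm W 2 μ) ^ 2 ≤ (C : ℝ≥0∞) * (eLpNorm H 2 μ) ^ 2 := by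
          rw [hWsq, eLpNorm_two_sq]; exact hHbound
        have hfin : (C : ℝ≥0∞) * (eLpNorm H 2 μ) ^ 2 ≠ ⊤ :=
          (ENNReal.mul_lt_top coe_lt_top (pow_lt_top hH.2)).ne
        have h2 := ENNReal.toReal_mono hfin h1
        rw [ENNReal.toReal_mul, ENNReal.toReal_pow, ENNReal.toReal_pow] at h2
        rw [hw, Lp.norm_toLp, hpnorm]
        simpa using h2
      calc ‖w‖ = Real.sqrt (‖w‖ ^ 2) := (Real.sqrt_sq (norm_nonneg _)).symm
        _ ≤ Real.sqrt ((C : ℝ) * ‖(↑p : Lp ℂ 2 μ)‖ ^ 2) := Real.sqrt_le_sqrt hsq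
        _ = Real.sqrt C * ‖(↑p : Lp ℂ 2 μ)‖ := by
            rw [Real.sqrt_mul C.coe_nonneg, Real.sqrt_sq (norm_nonneg _)]
    have hinner : (inner ℂ u (↑p : Lp ℂ 2 μ) : ℂ) = inner ℂ (hf.toLp f) w := by
      rw [L2.inner_def, L2.inner_def]
      apply integral_congr_ae
      filter_upwards [hgf.coeFn_toLp, hp_ae, hf.coeFn_toLp, hWmem.coeFn_toLp] with z h1 h2 h3 h4
      rw [h1, h2, h3, h4, RCLike.inner_apply, RCLike.inner_apply]
      simp only [hW, map_mul]
      ring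
    have hproj : (inner ℂ (↑p : Lp ℂ 2 μ) (↑p : Lp ℂ 2 μ) : ℂ) = inner ℂ u (↑p : Lp ℂ 2 μ) := by
      have h := Submodule.inner_orthogonalProjectionOnto_eq_of_mem_right (K := K) p u
      rwa [← hp, Submodule.coe_inner] at h
    have hfinal : ‖(↑p : Lp ℂ 2 μ)‖ ^ 2 ≤ ‖hf.toLp f‖ * (Real.sqrt C * ‖(↑p : Lp ℂ 2 μ)‖) := by
      have h1 : ‖(↑p : Lp ℂ 2 μ)‖ ^ 2 = RCLike.re (inner ℂ (hf.toLp f) w : ℂ) := by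
        rw [← hinner, ← hproj, inner_self_eq_norm_sq]
      rw [h1]
      calc RCLike.re (inner ℂ (hf.toLp f) w : ℂ) ≤ ‖hf.toLp f‖ * ‖w‖ := re_inner_le_norm _ _
        _ ≤ _ := mul_le_mul_of_nonneg_left hwnorm (norm_nonneg _)
    have hnp : ‖p‖ = ‖(↑p : Lp ℂ 2 μ)‖ := rfl
    show ‖p‖ ≤ Real.sqrt C * ‖hf.toLp f‖
    rw [hnp]
    rcases eq_or_lt_of_le (norm_nonneg (↑p : Lp ℂ 2 μ)) with h0 | h0
    · rw [← h0]; positivity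
    · nlinarith [norm_nonneg (hf.toLp f), Real.sqrt_nonneg (C : ℝ)]
end

section
/- For a measurable g : ℂ → ℂ, the measure |g|² dμ is a Carleson measure for the Fock space F² (i.e. ∫ |h|² |g|² dμ ≤ C ‖h‖²_{F²} for all h ∈ F²) if and only if sup_{a ∈ ℂ} π^{-1} ∫_ℂ e^{-|z-a|²} |g(z)|² dA(z) < ∞. -/
open MeasureTheory Real NNReal ENNReal

section FockAux

open Set Complex Metric

theorem ofReal_norm_eq_coe_nnnorm {E : Type*} [SeminormedAddCommGroup E] (a : E) :
    ENNReal.ofReal ‖a‖ = (‖a‖₊ : ℝ≥0∞) := ofReal_norm a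

theorem meanValue0 (F : ℂ → ℂ) (hF : Differentiable ℂ F) (c : ℂ) (r : ℝ) (hr : 0 < r) :
    F c = (2 * π)⁻¹ • ∫ θ in (0:ℝ)..(2*π), F (circleMap c r θ) := by
  have h := (hF.differentiableOn (s := Metric.closedBall c r)).circleIntegral_sub_inv_smul
      (Metric.mem_ball_self hr)
  rw [circleIntegral] at h
  have heq : ∀ θ ∈ Set.uIcc (0:ℝ) (2*π),
      deriv (circleMap c r) θ • (circleMap c r θ - c)⁻¹ • F (circleMap c r θ)
        = I • F (circleMap c r θ) := by
    intro θ _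
    rw [deriv_circleMap, circleMap_sub_center, smul_smul]
    have h0 : circleMap 0 r θ ≠ 0 := by simp [circleMap_eq_center_iff, hr.ne']
    congr 1
    field_simp
  rw [intervalIntegral.integral_congr heq, intervalIntegral.integral_smul] at h
  have h2 : I • ∫ θ in (0:ℝ)..(2*π), F (circleMap c r θ) = (2 * ↑π * I : ℂ) • F c := h
  simp only [smul_eq_mul] at h2 ⊢
  have h3 : (∫ θ in (0:ℝ)..(2*π), F (circleMap c r θ)) = (2 * ↑π : ℂ) * F c := by
    apply mul_left_cancel₀ I_ne_zero
    rw [h2]; ring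
  rw [h3]
  have hπ : ((2 * π : ℝ) : ℂ) ≠ 0 := by exact_mod_cast (by positivity : (2*π:ℝ) ≠ 0)
  push_cast at hπ ⊢
  field_simp
  rw [Complex.real_smul]
  push_cast
  field_simp

theorem meanValue (F : ℂ → ℂ) (hF : Differentiable ℂ F) (c : ℂ) (r : ℝ) (hr : 0 < r) :
    F c = (2 * π)⁻¹ • ∫ θ in (-π)..π, F (circleMap c r θ) := by
  have hper : Function.Periodic (fun θ => F (circleMap c r θ)) (2*π) := fun θ => by
    simp [periodic_circleMap c r θ]
  have hshift := hper.intervalIntegral_add_eq (-π) 0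
  rw [show -π + 2*π = π by ring, zero_add] at hshift
  rw [hshift]
  exact meanValue0 F hF c r hr

theorem cs_lintegral {α : Type*} [MeasurableSpace α] (μ : Measure α) (u : α → ℝ≥0∞)
    (hu : AEMeasurable u μ) :
    (∫⁻ x, u x ∂μ) ^ 2 ≤ μ Set.univ * ∫⁻ x, (u x) ^ 2 ∂μ := by
  have hpq : (2:ℝ).HolderConjugate 2 := by constructor <;> norm_num
  have h := ENNReal.lintegral_mul_le_Lp_mul_Lq μ hpq hu (aemeasurable_const (b := (1:ℝ≥0∞)))
  simp only [Pi.mul_apply, mul_one, ENNReal.one_rpow, lintegral_const, one_mul] at h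
  have h2 : (∫⁻ x, u x ∂μ) ^ (2:ℝ) ≤ ((∫⁻ a, u a ^ (2:ℝ) ∂μ) ^ (1/(2:ℝ)) * (μ univ) ^ (1/(2:ℝ))) ^ (2:ℝ) :=
    ENNReal.rpow_le_rpow h (by norm_num)
  rw [ENNReal.mul_rpow_of_nonneg _ _ (by norm_num), ← ENNReal.rpow_mul, ← ENNReal.rpow_mul] at h2
  norm_num at h2
  exact h2.trans (le_of_eq (mul_comm _ _))

theorem circle_step (F : ℂ → ℂ) (hF : Differentiable ℂ F) (c : ℂ) (r : ℝ) (hr : 0 < r) :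
    ENNReal.ofReal (2*π) * ((‖F c‖₊ : ℝ≥0∞))^2 ≤
      ∫⁻ θ in Ioo (-π) π, ((‖F (circleMap c r θ)‖₊ : ℝ≥0∞))^2 := by
  have hcont : Continuous fun θ => F (circleMap c r θ) :=
    hF.continuous.comp (continuous_circleMap c r)
  have hint : IntegrableOn (fun θ => F (circleMap c r θ)) (Ioc (-π) π) volume :=
    hcont.integrableOn_Ioc
  -- step 1: norm bound
  have h1 : ‖F c‖ ≤ (2*π)⁻¹ * ∫ θ in Ioc (-π) π, ‖F (circleMap c r θ)‖ := by
    calc ‖F c‖ = (2*π)⁻¹ * ‖∫ θ in (-π)..π, F (circleMap c r θ)‖ := by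
          rw [meanValue F hF c r hr, norm_smul, norm_inv, Real.norm_eq_abs,
            abs_of_pos (by positivity : (0:ℝ) < 2*π)]
    _ ≤ (2*π)⁻¹ * ∫ θ in Ioc (-π) π, ‖F (circleMap c r θ)‖ := by
          gcongr
          rw [intervalIntegral.integral_of_le (by linarith [Real.pi_pos] : -π ≤ π)] at *
          exact norm_integral_le_integral_norm _
  -- to ℝ≥0∞
  have h2 : (‖F c‖₊ : ℝ≥0∞) ≤ ENNReal.ofReal (2*π)⁻¹ *
      ∫⁻ θ in Ioc (-π) π, (‖F (circleMap c r θ)‖₊ : ℝ≥0∞) := by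
    rw [← ofReal_norm_eq_coe_nnnorm, ← (show ENNReal.ofReal _ =
      ∫⁻ θ in Ioc (-π) π, (‖F (circleMap c r θ)‖₊ : ℝ≥0∞) from ofReal_integral_norm_eq_lintegral_enorm hint)]
    rw [← ENNReal.ofReal_mul (by positivity)]
    exact ENNReal.ofReal_le_ofReal h1
  -- square
  have h3 := pow_le_pow_left' h2 2
  rw [mul_pow] at h3
  have hcs := cs_lintegral (volume.restrict (Ioc (-π) π))
      (fun θ => (‖F (circleMap c r θ)‖₊ : ℝ≥0∞))
      (((hcont.measurable).nnnorm.coe_nnreal_ennreal).aemeasurable)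
  rw [Measure.restrict_apply_univ, Real.volume_Ioc, show π - -π = 2*π by ring] at hcs
  have h4 : (‖F c‖₊ : ℝ≥0∞)^2 ≤ ENNReal.ofReal (2*π)⁻¹ ^ 2 * (ENNReal.ofReal (2*π) *
      ∫⁻ θ in Ioc (-π) π, ((‖F (circleMap c r θ)‖₊ : ℝ≥0∞))^2) :=
    h3.trans (by gcongr)
  have hIoo : (∫⁻ θ in Ioc (-π) π, ((‖F (circleMap c r θ)‖₊ : ℝ≥0∞))^2)
      = ∫⁻ θ in Ioo (-π) π, ((‖F (circleMap c r θ)‖₊ : ℝ≥0∞))^2 :=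
    (setLIntegral_congr (Ioo_ae_eq_Ioc (α := ℝ) (a := -π) (b := π))).symm
  rw [hIoo] at h4
  calc ENNReal.ofReal (2*π) * ((‖F c‖₊ : ℝ≥0∞))^2
      ≤ ENNReal.ofReal (2*π) * (ENNReal.ofReal (2*π)⁻¹ ^ 2 * (ENNReal.ofReal (2*π) *
        ∫⁻ θ in Ioo (-π) π, ((‖F (circleMap c r θ)‖₊ : ℝ≥0∞))^2)) := by gcongr
  _ = (ENNReal.ofReal (2*π) * ENNReal.ofReal (2*π)⁻¹)^2 *
        ∫⁻ θ in Ioo (-π) π, ((‖F (circleMap c r θ)‖₊ : ℝ≥0∞))^2 := by ring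
  _ = ∫⁻ θ in Ioo (-π) π, ((‖F (circleMap c r θ)‖₊ : ℝ≥0∞))^2 := by
        rw [← ENNReal.ofReal_mul (by positivity), mul_inv_cancel₀ (by positivity : (2*π:ℝ) ≠ 0)]
        simp

theorem lintegral_comp_polarCoord_symm_real (f : ℝ × ℝ → ℝ≥0∞) :
    (∫⁻ p in polarCoord.target, ENNReal.ofReal p.1 * f (polarCoord.symm p)) = ∫⁻ p, f p := by
  set B : ℝ × ℝ → ℝ × ℝ →L[ℝ] ℝ × ℝ := fun p =>
    LinearMap.toContinuousLinearMap (Matrix.toLin (Module.Basis.finTwoProd ℝ) (Module.Basis.finTwoProd ℝ)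
      !![Real.cos p.2, -p.1 * Real.sin p.2; Real.sin p.2, p.1 * Real.cos p.2])
  have A : ∀ p ∈ polarCoord.symm.source, HasFDerivAt polarCoord.symm (B p) p := fun p _ =>
    hasFDerivAt_polarCoord_symm p
  have B_det : ∀ p, (B p).det = p.1 := by
    intro p
    conv_rhs => rw [← one_mul p.1, ← Real.cos_sq_add_sin_sq p.2]
    simp only [B, neg_mul, LinearMap.det_toContinuousLinearMap, LinearMap.det_toLin,
      Matrix.det_fin_two_of, sub_neg_eq_add]
    ring
  symm
  calc
    ∫⁻ p, f p = ∫⁻ p in polarCoord.source, f p := by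
      rw [← setLIntegral_univ]
      exact setLIntegral_congr polarCoord_source_ae_eq_univ.symm
    _ = ∫⁻ p in polarCoord.symm '' polarCoord.target, f p := by
      rw [polarCoord.symm_image_target_eq_source]
    _ = ∫⁻ p in polarCoord.target, ENNReal.ofReal |(B p).det| * f (polarCoord.symm p) := by
      apply lintegral_image_eq_lintegral_abs_det_fderiv_mul volume
        polarCoord.open_target.measurableSet
        (fun p hp => (A p hp).hasFDerivWithinAt)
        polarCoord.symm.injOn
    _ = ∫⁻ p in polarCoord.target, ENNReal.ofReal p.1 * f (polarCoord.symm p) := by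
      apply setLIntegral_congr_fun polarCoord.open_target.measurableSet
      intro p hp
      dsimp only
      rw [B_det, abs_of_pos hp.1]

theorem lintegral_comp_polarCoord_symm_complex (f : ℂ → ℝ≥0∞) :
    (∫⁻ p in polarCoord.target, ENNReal.ofReal p.1 * f (Complex.polarCoord.symm p)) = ∫⁻ z, f z := by
  rw [← (Complex.volume_preserving_equiv_real_prod.symm).lintegral_comp_emb
    Complex.measurableEquivRealProd.symm.measurableEmbedding, ← lintegral_comp_polarCoord_symm_real]
  rfl

theorem submean (F : ℂ → ℂ) (hF : Differentiable ℂ F) (c : ℂ) :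
    ((‖F c‖₊ : ℝ≥0∞))^2 ≤ ENNReal.ofReal π⁻¹ * ∫⁻ w in Metric.ball c 1, ((‖F w‖₊ : ℝ≥0∞))^2 := by
  set G : ℂ → ℝ≥0∞ := fun w => ((‖F w‖₊ : ℝ≥0∞))^2 with hG
  have hGm : Measurable G := by
    exact (hF.continuous.measurable.nnnorm.coe_nnreal_ennreal).pow_const 2
  set f : ℂ → ℝ≥0∞ := (Metric.ball (0:ℂ) 1).indicator (fun w => G (c + w)) with hf
  have hfm : Measurable f :=
    ((hGm.comp (measurable_const_add c)).indicator Metric.isOpen_ball.measurableSet)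
  -- translation
  have ht : ∫⁻ w in Metric.ball c 1, G w = ∫⁻ w, f w := by
    rw [← lintegral_indicator Metric.isOpen_ball.measurableSet _]
    calc ∫⁻ w, (Metric.ball c 1).indicator G w
        = ∫⁻ w, (Metric.ball c 1).indicator G (c + w) := (lintegral_add_left_eq_self _ c).symm
    _ = ∫⁻ w, f w := by
        apply lintegral_congr; intro w
        rw [hf]
        by_cases hw : w ∈ Metric.ball (0:ℂ) 1
        · rw [Set.indicator_of_mem hw, Set.indicator_of_mem (by
            simpa [Metric.mem_ball, dist_eq_norm] using hw)]
        · rw [Set.indicator_of_notMem hw, Set.indicator_of_notMem (by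
            simpa [Metric.mem_ball, dist_eq_norm] using hw)]
  -- polar
  have hp : ∫⁻ w, f w
      = ∫⁻ p in Set.Ioo (0:ℝ) 1 ×ˢ Set.Ioo (-π) π, ENNReal.ofReal p.1 * G (circleMap c p.1 p.2) := by
    rw [← lintegral_comp_polarCoord_symm_complex f]
    rw [← lintegral_indicator polarCoord.open_target.measurableSet _,
        ← lintegral_indicator ((measurableSet_Ioo.prod measurableSet_Ioo)) _]
    apply lintegral_congr
    intro p
    have hsymm : c + Complex.polarCoord.symm p = circleMap c p.1 p.2 := by
      rw [Complex.polarCoord_symm_apply, circleMap, Complex.exp_mul_I]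
      push_cast
      ring
    have habs : ‖Complex.polarCoord.symm p‖ = |p.1| := Complex.norm_polarCoord_symm p
    by_cases hp1 : p ∈ polarCoord.target
    · have hp1' : 0 < p.1 := by
        rw [polarCoord_target] at hp1; exact hp1.1
      have hball : Complex.polarCoord.symm p ∈ Metric.ball (0:ℂ) 1 ↔ p.1 < 1 := by
        rw [Metric.mem_ball, dist_zero_right, habs, abs_of_pos hp1']
      rw [Set.indicator_of_mem hp1]
      by_cases hlt : p.1 < 1
      · have hmem : p ∈ Set.Ioo (0:ℝ) 1 ×ˢ Set.Ioo (-π) π := by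
          rw [polarCoord_target] at hp1
          exact ⟨⟨hp1', hlt⟩, hp1.2⟩
        rw [Set.indicator_of_mem hmem, hf, Set.indicator_of_mem (hball.2 hlt), hsymm]
      · have hmem : p ∉ Set.Ioo (0:ℝ) 1 ×ˢ Set.Ioo (-π) π := fun h => hlt h.1.2
        rw [Set.indicator_of_notMem hmem, hf,
          Set.indicator_of_notMem (fun h => hlt (hball.1 h))]
        simp
    · have hmem : p ∉ Set.Ioo (0:ℝ) 1 ×ˢ Set.Ioo (-π) π := by
        intro h
        apply hp1
        rw [polarCoord_target]
        exact ⟨h.1.1, h.2⟩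
      rw [Set.indicator_of_notMem hmem, Set.indicator_of_notMem hp1]
  -- Tonelli and radial integral
  have hcirc : Continuous fun p : ℝ × ℝ => circleMap c p.1 p.2 := by
    unfold circleMap
    fun_prop
  have hmeas2 : Measurable fun p : ℝ × ℝ => ENNReal.ofReal p.1 * G (circleMap c p.1 p.2) :=
    (measurable_fst.ennreal_ofReal).mul (hGm.comp hcirc.measurable)
  have hprod : (∫⁻ p in Set.Ioo (0:ℝ) 1 ×ˢ Set.Ioo (-π) π,
        ENNReal.ofReal p.1 * G (circleMap c p.1 p.2))
      = ∫⁻ r in Set.Ioo (0:ℝ) 1, ∫⁻ θ in Set.Ioo (-π) π,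
          ENNReal.ofReal r * G (circleMap c r θ) := by
    rw [Measure.volume_eq_prod, ← Measure.prod_restrict]
    exact lintegral_prod _ hmeas2.aemeasurable
  have hinner : ∀ r ∈ Set.Ioo (0:ℝ) 1,
      ENNReal.ofReal r * (ENNReal.ofReal (2*π) * ((‖F c‖₊ : ℝ≥0∞))^2) ≤
        ∫⁻ θ in Set.Ioo (-π) π, ENNReal.ofReal r * G (circleMap c r θ) := by
    intro r hr
    have hmg : Measurable fun θ => G (circleMap c r θ) :=
      hGm.comp (continuous_circleMap c r).measurable
    rw [lintegral_const_mul _ hmg]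
    exact mul_le_mul_right (circle_step F hF c r hr.1) _
  have hmono : Measurable fun r : ℝ => ∫⁻ θ in Set.Ioo (-π) π,
      ENNReal.ofReal r * G (circleMap c r θ) := by
    apply Measurable.lintegral_prod_right (f := fun r θ => ENNReal.ofReal r * G (circleMap c r θ))
    exact hmeas2
  have hrad : ∫⁻ r in Set.Ioo (0:ℝ) 1, ENNReal.ofReal r = ENNReal.ofReal (1/2 : ℝ) := by
    have hint : IntegrableOn (fun r : ℝ => r) (Set.Ioo (0:ℝ) 1) volume :=
      (continuous_id.integrableOn_Icc (a := (0:ℝ)) (b := 1)).mono_set Set.Ioo_subset_Icc_self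
    rw [← ofReal_integral_eq_lintegral_ofReal hint
      (Filter.eventually_of_mem (self_mem_ae_restrict measurableSet_Ioo) fun x hx => hx.1.le)]
    congr 1
    rw [← MeasureTheory.integral_Ioc_eq_integral_Ioo,
      ← intervalIntegral.integral_of_le (by norm_num : (0:ℝ) ≤ 1)]
    simp
  have hfinal : ENNReal.ofReal π * ((‖F c‖₊ : ℝ≥0∞))^2 ≤
      ∫⁻ w in Metric.ball c 1, ((‖F w‖₊ : ℝ≥0∞))^2 := by
    calc ENNReal.ofReal π * ((‖F c‖₊ : ℝ≥0∞))^2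
        = (∫⁻ r in Set.Ioo (0:ℝ) 1, ENNReal.ofReal r) *
            (ENNReal.ofReal (2*π) * ((‖F c‖₊ : ℝ≥0∞))^2) := by
          rw [hrad, ← mul_assoc, ← ENNReal.ofReal_mul (by norm_num),
            show (1/2 : ℝ) * (2 * π) = π by ring]
    _ = ∫⁻ r in Set.Ioo (0:ℝ) 1,
          ENNReal.ofReal r * (ENNReal.ofReal (2*π) * ((‖F c‖₊ : ℝ≥0∞))^2) := by
          rw [lintegral_mul_const _ measurable_ofReal]
    _ ≤ ∫⁻ r in Set.Ioo (0:ℝ) 1, ∫⁻ θ in Set.Ioo (-π) π,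
          ENNReal.ofReal r * G (circleMap c r θ) :=
          setLIntegral_mono hmono hinner
    _ = ∫⁻ w in Metric.ball c 1, ((‖F w‖₊ : ℝ≥0∞))^2 := by
          rw [← hprod, ← hp, ← ht]
  calc ((‖F c‖₊ : ℝ≥0∞))^2
      = ENNReal.ofReal π⁻¹ * (ENNReal.ofReal π * ((‖F c‖₊ : ℝ≥0∞))^2) := by
        rw [← mul_assoc, ← ENNReal.ofReal_mul (by positivity),
          inv_mul_cancel₀ (ne_of_gt Real.pi_pos)]
        simp
  _ ≤ ENNReal.ofReal π⁻¹ * ∫⁻ w in Metric.ball c 1, ((‖F w‖₊ : ℝ≥0∞))^2 :=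
        mul_le_mul_right hfinal _

theorem norm_sq_complex (z : ℂ) : ‖z‖^2 = z.re^2 + z.im^2 := by
  rw [Complex.sq_norm, Complex.normSq_apply]; ring

theorem key_id (w z : ℂ) : -2*((w * (starRingEnd ℂ) z).re) = ‖w - z‖^2 - ‖w‖^2 - ‖z‖^2 := by
  simp only [norm_sq_complex, Complex.sub_re, Complex.sub_im, Complex.mul_re,
    Complex.conj_re, Complex.conj_im]
  ring

theorem weighted_submean (h : ℂ → ℂ) (hh : Differentiable ℂ h) (z : ℂ) :
    (‖h z‖₊ : ℝ≥0∞)^2 * ENNReal.ofReal (Real.exp (-‖z‖^2)) ≤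
      ENNReal.ofReal (Real.exp 1 * π⁻¹) *
        ∫⁻ w in Metric.ball z 1, (‖h w‖₊ : ℝ≥0∞)^2 * ENNReal.ofReal (Real.exp (-‖w‖^2)) := by
  set F : ℂ → ℂ := fun w => h w * Complex.exp (-(w * (starRingEnd ℂ) z)) with hFdef
  have hF : Differentiable ℂ F := hh.mul ((Complex.differentiable_exp.comp
    ((differentiable_id.mul_const _).neg)))
  have hFnorm : ∀ w : ℂ, ((‖F w‖₊ : ℝ≥0∞))^2
      = (‖h w‖₊ : ℝ≥0∞)^2 * ENNReal.ofReal (Real.exp (-2*((w * (starRingEnd ℂ) z).re))) := by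
    intro w
    rw [← ofReal_norm_eq_coe_nnnorm, ← ofReal_norm_eq_coe_nnnorm, hFdef]
    simp only [norm_mul, Complex.norm_exp, Complex.neg_re]
    rw [ENNReal.ofReal_mul (by positivity), mul_pow, ← ENNReal.ofReal_pow (Real.exp_pos _).le,
      ← Real.exp_nat_mul]
    congr 2
    push_cast
    ring
  have hFz : ((‖F z‖₊ : ℝ≥0∞))^2 = (‖h z‖₊ : ℝ≥0∞)^2 * ENNReal.ofReal (Real.exp (-2*‖z‖^2)) := by
    rw [hFnorm z, key_id z z]
    congr 2
    have : ‖z - z‖^2 = 0 := by simp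
    rw [this]; ring
  have hball : ∀ w ∈ Metric.ball z 1, ((‖F w‖₊ : ℝ≥0∞))^2 ≤
      ENNReal.ofReal (Real.exp 1 * Real.exp (-‖z‖^2)) *
        ((‖h w‖₊ : ℝ≥0∞)^2 * ENNReal.ofReal (Real.exp (-‖w‖^2))) := by
    intro w hw
    rw [hFnorm w, key_id w z]
    have hle : Real.exp (‖w - z‖^2 - ‖w‖^2 - ‖z‖^2)
        ≤ Real.exp 1 * Real.exp (-‖z‖^2) * Real.exp (-‖w‖^2) := by
      rw [← Real.exp_add, ← Real.exp_add]
      apply Real.exp_le_exp.2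
      have : ‖w - z‖ < 1 := by rw [Metric.mem_ball, dist_eq_norm] at hw; exact hw
      nlinarith [norm_nonneg (w - z)]
    calc (‖h w‖₊ : ℝ≥0∞)^2 * ENNReal.ofReal (Real.exp (‖w - z‖^2 - ‖w‖^2 - ‖z‖^2))
        ≤ (‖h w‖₊ : ℝ≥0∞)^2 * ENNReal.ofReal (Real.exp 1 * Real.exp (-‖z‖^2) * Real.exp (-‖w‖^2)) := by
          exact mul_le_mul_right (ENNReal.ofReal_le_ofReal hle) _
    _ = ENNReal.ofReal (Real.exp 1 * Real.exp (-‖z‖^2)) *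
          ((‖h w‖₊ : ℝ≥0∞)^2 * ENNReal.ofReal (Real.exp (-‖w‖^2))) := by
          rw [ENNReal.ofReal_mul (by positivity), ENNReal.ofReal_mul (by positivity)]
          ring
  have hsub := submean F hF z
  have hintle : ∫⁻ w in Metric.ball z 1, ((‖F w‖₊ : ℝ≥0∞))^2
      ≤ ENNReal.ofReal (Real.exp 1 * Real.exp (-‖z‖^2)) *
        ∫⁻ w in Metric.ball z 1, (‖h w‖₊ : ℝ≥0∞)^2 * ENNReal.ofReal (Real.exp (-‖w‖^2)) := by
    rw [← lintegral_const_mul _ (f := fun w => (‖h w‖₊ : ℝ≥0∞)^2 * ENNReal.ofReal (Real.exp (-‖w‖^2))) (((hh.continuous.measurable.nnnorm.coe_nnreal_ennreal).pow_const 2).mul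
      (by fun_prop : Measurable fun w : ℂ => ENNReal.ofReal (Real.exp (-‖w‖^2))))]
    exact setLIntegral_mono (measurable_const.mul
      (((hh.continuous.measurable.nnnorm.coe_nnreal_ennreal).pow_const 2).mul
        (by fun_prop : Measurable fun w : ℂ => ENNReal.ofReal (Real.exp (-‖w‖^2))))) hball
  -- combine
  have hcomb : (‖h z‖₊ : ℝ≥0∞)^2 * ENNReal.ofReal (Real.exp (-2*‖z‖^2)) ≤
      ENNReal.ofReal π⁻¹ * (ENNReal.ofReal (Real.exp 1 * Real.exp (-‖z‖^2)) *
        ∫⁻ w in Metric.ball z 1, (‖h w‖₊ : ℝ≥0∞)^2 * ENNReal.ofReal (Real.exp (-‖w‖^2))) := by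
    rw [← hFz]
    exact hsub.trans (mul_le_mul_right hintle _)
  have hmul := mul_le_mul_right hcomb (ENNReal.ofReal (Real.exp (‖z‖^2)))
  have hco1 : ENNReal.ofReal (Real.exp (‖z‖^2)) * ENNReal.ofReal (Real.exp (-2*‖z‖^2))
      = ENNReal.ofReal (Real.exp (-‖z‖^2)) := by
    rw [← ENNReal.ofReal_mul (Real.exp_pos _).le, ← Real.exp_add]
    congr 1
    ring
  calc (‖h z‖₊ : ℝ≥0∞)^2 * ENNReal.ofReal (Real.exp (-‖z‖^2))
      = ENNReal.ofReal (Real.exp (‖z‖^2)) * ((‖h z‖₊ : ℝ≥0∞)^2 * ENNReal.ofReal (Real.exp (-2*‖z‖^2))) := by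
        rw [show ENNReal.ofReal (Real.exp (‖z‖^2)) * ((‖h z‖₊ : ℝ≥0∞)^2 * ENNReal.ofReal (Real.exp (-2*‖z‖^2)))
          = (ENNReal.ofReal (Real.exp (‖z‖^2)) * ENNReal.ofReal (Real.exp (-2*‖z‖^2))) * (‖h z‖₊ : ℝ≥0∞)^2
          from by ring, hco1, mul_comm]
  _ ≤ ENNReal.ofReal (Real.exp (‖z‖^2)) * (ENNReal.ofReal π⁻¹ *
        (ENNReal.ofReal (Real.exp 1 * Real.exp (-‖z‖^2)) *
          ∫⁻ w in Metric.ball z 1, (‖h w‖₊ : ℝ≥0∞)^2 * ENNReal.ofReal (Real.exp (-‖w‖^2)))) := hmul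
  _ = ENNReal.ofReal (Real.exp 1 * π⁻¹) *
        ∫⁻ w in Metric.ball z 1, (‖h w‖₊ : ℝ≥0∞)^2 * ENNReal.ofReal (Real.exp (-‖w‖^2)) := by
        rw [show ENNReal.ofReal (Real.exp (‖z‖^2)) * (ENNReal.ofReal π⁻¹ *
            (ENNReal.ofReal (Real.exp 1 * Real.exp (-‖z‖^2)) *
              ∫⁻ w in Metric.ball z 1, (‖h w‖₊ : ℝ≥0∞)^2 * ENNReal.ofReal (Real.exp (-‖w‖^2))))
          = (ENNReal.ofReal (Real.exp (‖z‖^2)) * (ENNReal.ofReal π⁻¹ *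
              ENNReal.ofReal (Real.exp 1 * Real.exp (-‖z‖^2)))) *
            ∫⁻ w in Metric.ball z 1, (‖h w‖₊ : ℝ≥0∞)^2 * ENNReal.ofReal (Real.exp (-‖w‖^2))
          from by ring]
        congr 1
        rw [← ENNReal.ofReal_mul (by positivity), ← ENNReal.ofReal_mul (Real.exp_pos _).le]
        congr 1
        have hx : Real.exp (‖z‖^2) * Real.exp (-‖z‖^2) = 1 := by
          rw [← Real.exp_add]; simp
        linear_combination (Real.exp 1 * π⁻¹) * hx

theorem lintegral_gauss_real : ∫⁻ x : ℝ, ENNReal.ofReal (Real.exp (-x^2)) = ENNReal.ofReal (Real.sqrt π) := by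
  have hint : Integrable (fun x : ℝ => Real.exp (-x^2)) := by
    simpa using integrable_exp_neg_mul_sq (by norm_num : (0:ℝ) < 1)
  rw [← ofReal_integral_eq_lintegral_ofReal hint (Filter.Eventually.of_forall fun x => (Real.exp_pos _).le)]
  congr 1
  have := integral_gaussian 1
  simpa using this

theorem lintegral_gauss_complex (a : ℂ) :
    ∫⁻ z : ℂ, ENNReal.ofReal (Real.exp (-‖z - a‖^2)) = ENNReal.ofReal π := by
  have htrans : ∫⁻ z : ℂ, ENNReal.ofReal (Real.exp (-‖z - a‖^2))
      = ∫⁻ z : ℂ, ENNReal.ofReal (Real.exp (-‖z‖^2)) := by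
    rw [← lintegral_add_right_eq_self (fun z => ENNReal.ofReal (Real.exp (-‖z - a‖^2))) a]
    simp
  rw [htrans]
  have hmp := Complex.volume_preserving_equiv_real_prod
  have : ∫⁻ z : ℂ, ENNReal.ofReal (Real.exp (-‖z‖^2))
      = ∫⁻ p : ℝ × ℝ, ENNReal.ofReal (Real.exp (-p.1^2)) * ENNReal.ofReal (Real.exp (-p.2^2)) := by
    rw [← hmp.lintegral_comp (show Measurable fun p : ℝ × ℝ => ENNReal.ofReal (Real.exp (-p.1^2)) * ENNReal.ofReal (Real.exp (-p.2^2)) from ((measurable_fst.pow_const 2).neg.exp.ennreal_ofReal).mul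
      ((measurable_snd.pow_const 2).neg.exp.ennreal_ofReal))]
    apply lintegral_congr
    intro z
    rw [← ENNReal.ofReal_mul (Real.exp_pos _).le, ← Real.exp_add]
    congr 2
    rw [norm_sq_complex]
    have : Complex.measurableEquivRealProd z = (z.re, z.im) := rfl
    rw [this]
    ring
  rw [this, Measure.volume_eq_prod, lintegral_prod_mul
    (by fun_prop : AEMeasurable (fun x : ℝ => ENNReal.ofReal (Real.exp (-x^2))) volume)
    (by fun_prop : AEMeasurable (fun x : ℝ => ENNReal.ofReal (Real.exp (-x^2))) volume),
    lintegral_gauss_real, ← ENNReal.ofReal_mul (Real.sqrt_nonneg _),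
    Real.mul_self_sqrt Real.pi_pos.le]

theorem gauss_lint (f : ℂ → ℝ≥0∞) (hf : Measurable f) :
    ∫⁻ z, f z ∂gaussMeasure = ∫⁻ z, f z * ENNReal.ofReal (Real.pi⁻¹ * Real.exp (-‖z‖ ^ 2)) := by
  rw [gaussMeasure, lintegral_withDensity_eq_lintegral_mul _ (by fun_prop) hf]
  exact lintegral_congr fun z => mul_comm _ _

theorem kernel_norm (a z : ℂ) :
    ((‖Complex.exp (z * (starRingEnd ℂ) a - ((‖a‖^2/2 : ℝ) : ℂ))‖₊ : ℝ≥0∞))^2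
      * ENNReal.ofReal (Real.exp (-‖z‖^2)) = ENNReal.ofReal (Real.exp (-‖z - a‖^2)) := by
  rw [← ofReal_norm_eq_coe_nnnorm]
  rw [Complex.norm_exp]
  rw [← ENNReal.ofReal_pow (Real.exp_pos _).le, ← Real.exp_nat_mul,
    ← ENNReal.ofReal_mul (Real.exp_pos _).le, ← Real.exp_add]
  congr 1
  have h1 : (z * (starRingEnd ℂ) a - ((‖a‖^2/2 : ℝ) : ℂ)).re
      = (z * (starRingEnd ℂ) a).re - ‖a‖^2/2 := by
    simp [← Complex.ofReal_pow]
  rw [h1]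
  have h2 := key_id z a
  rw [Real.exp_eq_exp]
  push_cast
  linarith [h2]

end FockAux

/-- For measurable `g`, the measure `|g|² dμ` is a Carleson measure for the Fock space
(`∫ |h|² |g|² dμ ≤ C ‖h‖²` for all entire `h ∈ L²(μ)`) iff
`sup_a π⁻¹ ∫ e^{-|z-a|²} |g(z)|² dA(z) < ∞`. -/
theorem stmt_11 (g : ℂ → ℂ) (hg : Measurable g) :
    (∃ C : ℝ≥0, ∀ h : ℂ → ℂ, Differentiable ℂ h → MemLp h 2 gaussMeasure →
        ∫⁻ z, (‖h z‖₊ : ℝ≥0∞) ^ 2 * (‖g z‖₊ : ℝ≥0∞) ^ 2 ∂gaussMeasure ≤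
          C * ∫⁻ z, (‖h z‖₊ : ℝ≥0∞) ^ 2 ∂gaussMeasure) ↔
    (⨆ a : ℂ, ENNReal.ofReal Real.pi⁻¹ *
        ∫⁻ z, ENNReal.ofReal (Real.exp (-‖z - a‖ ^ 2)) * (‖g z‖₊ : ℝ≥0∞) ^ 2
          ∂(volume : Measure ℂ)) < ⊤ := by
  have hgm2 : Measurable fun z => ((‖g z‖₊ : ℝ≥0∞)) ^ 2 :=
    (hg.nnnorm.coe_nnreal_ennreal).pow_const 2
  constructor
  · rintro ⟨C, hC⟩
    refine lt_of_le_of_lt (iSup_le fun a => ?_) (ENNReal.coe_lt_top (r := C))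
    set h : ℂ → ℂ := fun z => Complex.exp (z * (starRingEnd ℂ) a - ((‖a‖^2/2 : ℝ) : ℂ)) with hhdef
    have hdiff : Differentiable ℂ h :=
      Complex.differentiable_exp.comp ((differentiable_id.mul_const _).sub_const _)
    have hhm : Measurable h := hdiff.continuous.measurable
    have hhm2 : Measurable fun z => ((‖h z‖₊ : ℝ≥0∞)) ^ 2 :=
      (hhm.nnnorm.coe_nnreal_ennreal).pow_const 2
    have hnorm : ∀ z, ((‖h z‖₊ : ℝ≥0∞))^2 * ENNReal.ofReal (Real.exp (-‖z‖^2))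
        = ENNReal.ofReal (Real.exp (-‖z - a‖^2)) := fun z => kernel_norm a z
    have hL2 : ∫⁻ z, ((‖h z‖₊ : ℝ≥0∞)) ^ 2 ∂gaussMeasure = 1 := by
      rw [gauss_lint _ hhm2]
      calc ∫⁻ z, ((‖h z‖₊ : ℝ≥0∞))^2 * ENNReal.ofReal (π⁻¹ * Real.exp (-‖z‖^2))
          = ∫⁻ z, ENNReal.ofReal π⁻¹ * ENNReal.ofReal (Real.exp (-‖z - a‖^2)) := by
            apply lintegral_congr; intro z
            rw [ENNReal.ofReal_mul (by positivity), ← hnorm z]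
            ring
      _ = ENNReal.ofReal π⁻¹ * ENNReal.ofReal π := by
            rw [lintegral_const_mul _ (by fun_prop), lintegral_gauss_complex a]
      _ = 1 := by
            rw [← ENNReal.ofReal_mul (by positivity), inv_mul_cancel₀ Real.pi_ne_zero,
              ENNReal.ofReal_one]
    have hMem : MemLp h 2 gaussMeasure := by
      refine ⟨hdiff.continuous.aestronglyMeasurable, ?_⟩
      rw [eLpNorm_eq_lintegral_rpow_enorm_toReal (by norm_num) (by norm_num)]
      have h2 : ∫⁻ z, ((‖h z‖₊ : ℝ≥0∞)) ^ (2:ℝ≥0∞).toReal ∂gaussMeasure = 1 := by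
        rw [← hL2]
        apply lintegral_congr; intro z
        rw [← ENNReal.rpow_natCast]
        norm_num
      rw [show ∫⁻ x, ‖h x‖ₑ ^ (2:ℝ≥0∞).toReal ∂gaussMeasure = 1 from h2]
      simp
    have hC' := hC h hdiff hMem
    rw [hL2, mul_one] at hC'
    refine le_trans (le_of_eq ?_) hC'
    rw [gauss_lint (fun z => (‖h z‖₊ : ℝ≥0∞) ^ 2 * (‖g z‖₊ : ℝ≥0∞) ^ 2) (hhm2.mul hgm2), ← lintegral_const_mul _ (by fun_prop)]
    apply lintegral_congr; intro z
    rw [ENNReal.ofReal_mul (by positivity), ← hnorm z]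
    ring
  · intro hsup
    set S := (⨆ a : ℂ, ENNReal.ofReal Real.pi⁻¹ *
        ∫⁻ z, ENNReal.ofReal (Real.exp (-‖z - a‖ ^ 2)) * (‖g z‖₊ : ℝ≥0∞) ^ 2
          ∂(volume : Measure ℂ)) with hSdef
    have hSa : ∀ a : ℂ, ENNReal.ofReal π⁻¹ *
        ∫⁻ z, ENNReal.ofReal (Real.exp (-‖z - a‖ ^ 2)) * (‖g z‖₊ : ℝ≥0∞) ^ 2 ≤ S :=
      fun a => le_iSup (fun a => ENNReal.ofReal Real.pi⁻¹ *
        ∫⁻ z, ENNReal.ofReal (Real.exp (-‖z - a‖ ^ 2)) * (‖g z‖₊ : ℝ≥0∞) ^ 2) a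
    refine ⟨(ENNReal.ofReal (Real.exp 1 ^ 2) * S).toNNReal, fun h hdiff _ => ?_⟩
    have hhm : Measurable h := hdiff.continuous.measurable
    have hhm2 : Measurable fun z => ((‖h z‖₊ : ℝ≥0∞)) ^ 2 :=
      (hhm.nnnorm.coe_nnreal_ennreal).pow_const 2
    set K : ℂ → ℝ≥0∞ := fun w => ((‖h w‖₊ : ℝ≥0∞))^2 * ENNReal.ofReal (Real.exp (-‖w‖^2))
      with hKdef
    have hKm : Measurable K := hhm2.mul (by fun_prop)
    -- the inner g-integral bound
    have hginner : ∀ w : ℂ, (∫⁻ z in Metric.ball w 1, ((‖g z‖₊ : ℝ≥0∞))^2)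
        ≤ ENNReal.ofReal (Real.exp 1) * (ENNReal.ofReal π * S) := by
      intro w
      have h1 : (∫⁻ z in Metric.ball w 1, ((‖g z‖₊ : ℝ≥0∞))^2)
          ≤ ENNReal.ofReal (Real.exp 1) *
            ∫⁻ z, ENNReal.ofReal (Real.exp (-‖z - w‖^2)) * ((‖g z‖₊ : ℝ≥0∞))^2 := by
        rw [← lintegral_indicator Metric.isOpen_ball.measurableSet,
          ← lintegral_const_mul _ (by fun_prop)]
        apply lintegral_mono; intro z
        by_cases hz : z ∈ Metric.ball w 1
        · rw [Set.indicator_of_mem hz]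
          have hone : (1:ℝ≥0∞) ≤ ENNReal.ofReal (Real.exp 1) *
              ENNReal.ofReal (Real.exp (-‖z - w‖^2)) := by
            rw [← ENNReal.ofReal_mul (Real.exp_pos _).le, ← Real.exp_add]
            rw [show (1:ℝ≥0∞) = ENNReal.ofReal 1 from ENNReal.ofReal_one.symm]
            apply ENNReal.ofReal_le_ofReal
            apply Real.one_le_exp
            have hlt : ‖z - w‖ < 1 := by
              rw [Metric.mem_ball, dist_eq_norm] at hz; exact hz
            nlinarith [norm_nonneg (z - w)]
          calc ((‖g z‖₊ : ℝ≥0∞))^2 = 1 * ((‖g z‖₊ : ℝ≥0∞))^2 := (one_mul _).symm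
          _ ≤ ENNReal.ofReal (Real.exp 1) * ENNReal.ofReal (Real.exp (-‖z - w‖^2))
                * ((‖g z‖₊ : ℝ≥0∞))^2 := mul_le_mul_left hone _
          _ = ENNReal.ofReal (Real.exp 1) * (ENNReal.ofReal (Real.exp (-‖z - w‖^2))
                * ((‖g z‖₊ : ℝ≥0∞))^2) := by ring
        · rw [Set.indicator_of_notMem hz]; exact zero_le
      have h2 : (∫⁻ z, ENNReal.ofReal (Real.exp (-‖z - w‖^2)) * ((‖g z‖₊ : ℝ≥0∞))^2)
          ≤ ENNReal.ofReal π * S := by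
        calc (∫⁻ z, ENNReal.ofReal (Real.exp (-‖z - w‖^2)) * ((‖g z‖₊ : ℝ≥0∞))^2)
            = ENNReal.ofReal π * (ENNReal.ofReal π⁻¹ *
              ∫⁻ z, ENNReal.ofReal (Real.exp (-‖z - w‖^2)) * ((‖g z‖₊ : ℝ≥0∞))^2) := by
              rw [← mul_assoc, ← ENNReal.ofReal_mul Real.pi_pos.le,
                mul_inv_cancel₀ Real.pi_ne_zero, ENNReal.ofReal_one, one_mul]
        _ ≤ ENNReal.ofReal π * S := mul_le_mul_right (hSa w) _
      exact h1.trans (mul_le_mul_right h2 _)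
    -- double integral structure
    set Ψ : ℂ × ℂ → ℝ≥0∞ := fun p =>
      Set.indicator {q : ℂ × ℂ | ‖q.2 - q.1‖ < 1} (fun q => K q.2 * ((‖g q.1‖₊ : ℝ≥0∞))^2) p
      with hΨdef
    have hΨm : Measurable Ψ := by
      apply Measurable.indicator ((hKm.comp measurable_snd).mul (hgm2.comp measurable_fst))
      exact (isOpen_lt (Continuous.norm (continuous_snd.sub continuous_fst)) continuous_const
        ).measurableSet
    have hinner_eq : ∀ z : ℂ, (((‖g z‖₊ : ℝ≥0∞))^2 * ∫⁻ w in Metric.ball z 1, K w)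
        = ∫⁻ w, Ψ (z, w) := by
      intro z
      rw [← lintegral_indicator Metric.isOpen_ball.measurableSet,
        ← lintegral_const_mul _ (hKm.indicator Metric.isOpen_ball.measurableSet)]
      apply lintegral_congr; intro w
      have hmemiff : ((z, w) : ℂ × ℂ) ∈ {q : ℂ × ℂ | ‖q.2 - q.1‖ < 1} ↔ w ∈ Metric.ball z 1 := by
        rw [Metric.mem_ball, dist_eq_norm]; rfl
      simp only [hΨdef]
      by_cases hw : w ∈ Metric.ball z 1
      · rw [Set.indicator_of_mem hw, Set.indicator_of_mem (hmemiff.2 hw)]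
        ring
      · rw [Set.indicator_of_notMem hw, Set.indicator_of_notMem (fun hc => hw (hmemiff.1 hc)),
          mul_zero]
    have hinner2 : ∀ w : ℂ, (∫⁻ z, Ψ (z, w))
        = K w * ∫⁻ z in Metric.ball w 1, ((‖g z‖₊ : ℝ≥0∞))^2 := by
      intro w
      rw [← lintegral_indicator Metric.isOpen_ball.measurableSet,
        ← lintegral_const_mul _ (hgm2.indicator Metric.isOpen_ball.measurableSet)]
      apply lintegral_congr; intro z
      have hmemiff : ((z, w) : ℂ × ℂ) ∈ {q : ℂ × ℂ | ‖q.2 - q.1‖ < 1} ↔ z ∈ Metric.ball w 1 := by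
        rw [Metric.mem_ball, dist_eq_norm, norm_sub_rev]; rfl
      simp only [hΨdef]
      by_cases hz : z ∈ Metric.ball w 1
      · rw [Set.indicator_of_mem hz, Set.indicator_of_mem (hmemiff.2 hz)]
      · rw [Set.indicator_of_notMem hz, Set.indicator_of_notMem (fun hc => hz (hmemiff.1 hc)),
          mul_zero]
    have hswap : (∫⁻ z, ∫⁻ w, Ψ (z, w)) = ∫⁻ w, ∫⁻ z, Ψ (z, w) :=
      lintegral_lintegral_swap hΨm.aemeasurable
    have hΨint_meas : Measurable fun z => ∫⁻ w, Ψ (z, w) :=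
      Measurable.lintegral_prod_right (f := fun z w => Ψ (z, w)) hΨm
    -- main chain
    rw [gauss_lint (fun z => (‖h z‖₊ : ℝ≥0∞) ^ 2 * (‖g z‖₊ : ℝ≥0∞) ^ 2) (hhm2.mul hgm2), gauss_lint _ hhm2]
    have main1 : (∫⁻ z, ((‖h z‖₊ : ℝ≥0∞) ^ 2 * (‖g z‖₊ : ℝ≥0∞) ^ 2) *
          ENNReal.ofReal (π⁻¹ * Real.exp (-‖z‖ ^ 2)))
        ≤ (ENNReal.ofReal π⁻¹ * ENNReal.ofReal (Real.exp 1 * π⁻¹)) *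
            ∫⁻ z, ∫⁻ w, Ψ (z, w) := by
      rw [← lintegral_const_mul _ hΨint_meas]
      apply lintegral_mono; intro z
      have hws := weighted_submean h hdiff z
      calc ((‖h z‖₊ : ℝ≥0∞) ^ 2 * (‖g z‖₊ : ℝ≥0∞) ^ 2) *
            ENNReal.ofReal (π⁻¹ * Real.exp (-‖z‖ ^ 2))
          = ENNReal.ofReal π⁻¹ * (((‖g z‖₊ : ℝ≥0∞)) ^ 2 *
            (((‖h z‖₊ : ℝ≥0∞)) ^ 2 * ENNReal.ofReal (Real.exp (-‖z‖ ^ 2)))) := by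
            rw [ENNReal.ofReal_mul (by positivity)]
            ring
      _ ≤ ENNReal.ofReal π⁻¹ * (((‖g z‖₊ : ℝ≥0∞)) ^ 2 *
            (ENNReal.ofReal (Real.exp 1 * π⁻¹) * ∫⁻ w in Metric.ball z 1, K w)) := by
            exact mul_le_mul_right (mul_le_mul_right hws _) _
      _ = (ENNReal.ofReal π⁻¹ * ENNReal.ofReal (Real.exp 1 * π⁻¹)) *
            (((‖g z‖₊ : ℝ≥0∞)) ^ 2 * ∫⁻ w in Metric.ball z 1, K w) := by ring
      _ = (ENNReal.ofReal π⁻¹ * ENNReal.ofReal (Real.exp 1 * π⁻¹)) * ∫⁻ w, Ψ (z, w) := by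
            rw [hinner_eq z]
    have main2 : (∫⁻ w, ∫⁻ z, Ψ (z, w))
        ≤ (ENNReal.ofReal (Real.exp 1) * (ENNReal.ofReal π * S)) * ∫⁻ w, K w := by
      rw [mul_comm (ENNReal.ofReal (Real.exp 1) * (ENNReal.ofReal π * S)) (∫⁻ w, K w),
        ← lintegral_mul_const _ hKm]
      apply lintegral_mono; intro w
      show (∫⁻ z, Ψ (z, w)) ≤ K w * (ENNReal.ofReal (Real.exp 1) * (ENNReal.ofReal π * S))
      rw [hinner2 w]
      exact mul_le_mul_right (hginner w) _
    have hKint : (∫⁻ z, ((‖h z‖₊ : ℝ≥0∞)) ^ 2 * ENNReal.ofReal (π⁻¹ * Real.exp (-‖z‖ ^ 2)))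
        = ENNReal.ofReal π⁻¹ * ∫⁻ w, K w := by
      rw [← lintegral_const_mul _ hKm]
      apply lintegral_congr; intro z
      rw [hKdef, ENNReal.ofReal_mul (by positivity)]
      ring
    have hcoef : (ENNReal.ofReal π⁻¹ * ENNReal.ofReal (Real.exp 1 * π⁻¹)) *
          (ENNReal.ofReal (Real.exp 1) * (ENNReal.ofReal π * S))
        = ((ENNReal.ofReal (Real.exp 1 ^ 2) * S).toNNReal : ℝ≥0∞) * ENNReal.ofReal π⁻¹ := by
      rw [ENNReal.coe_toNNReal (ENNReal.mul_ne_top ENNReal.ofReal_ne_top hsup.ne)]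
      rw [show (ENNReal.ofReal π⁻¹ * ENNReal.ofReal (Real.exp 1 * π⁻¹)) *
            (ENNReal.ofReal (Real.exp 1) * (ENNReal.ofReal π * S))
          = (ENNReal.ofReal π⁻¹ * ENNReal.ofReal (Real.exp 1 * π⁻¹) * ENNReal.ofReal (Real.exp 1)
              * ENNReal.ofReal π) * S from by ring,
        show ENNReal.ofReal (Real.exp 1 ^ 2) * S * ENNReal.ofReal π⁻¹
          = (ENNReal.ofReal (Real.exp 1 ^ 2) * ENNReal.ofReal π⁻¹) * S from by ring,
        ← ENNReal.ofReal_mul (by positivity), ← ENNReal.ofReal_mul (by positivity),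
        ← ENNReal.ofReal_mul (by positivity), ← ENNReal.ofReal_mul (by positivity)]
      congr 2
      have hπ : π * π⁻¹ = 1 := mul_inv_cancel₀ Real.pi_ne_zero
      linear_combination (Real.exp 1 ^ 2 * π⁻¹) * hπ
    calc (∫⁻ z, ((‖h z‖₊ : ℝ≥0∞) ^ 2 * (‖g z‖₊ : ℝ≥0∞) ^ 2) *
          ENNReal.ofReal (π⁻¹ * Real.exp (-‖z‖ ^ 2)))
        ≤ (ENNReal.ofReal π⁻¹ * ENNReal.ofReal (Real.exp 1 * π⁻¹)) *
            ∫⁻ z, ∫⁻ w, Ψ (z, w) := main1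
    _ = (ENNReal.ofReal π⁻¹ * ENNReal.ofReal (Real.exp 1 * π⁻¹)) *
            ∫⁻ w, ∫⁻ z, Ψ (z, w) := by rw [hswap]
    _ ≤ (ENNReal.ofReal π⁻¹ * ENNReal.ofReal (Real.exp 1 * π⁻¹)) *
            ((ENNReal.ofReal (Real.exp 1) * (ENNReal.ofReal π * S)) * ∫⁻ w, K w) :=
          mul_le_mul_right main2 _
    _ = ((ENNReal.ofReal π⁻¹ * ENNReal.ofReal (Real.exp 1 * π⁻¹)) *
            (ENNReal.ofReal (Real.exp 1) * (ENNReal.ofReal π * S))) * ∫⁻ w, K w := by ring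
    _ = (((ENNReal.ofReal (Real.exp 1 ^ 2) * S).toNNReal : ℝ≥0∞) * ENNReal.ofReal π⁻¹) *
            ∫⁻ w, K w := by rw [hcoef]
    _ = ((ENNReal.ofReal (Real.exp 1 ^ 2) * S).toNNReal : ℝ≥0∞) *
            ∫⁻ z, ((‖h z‖₊ : ℝ≥0∞)) ^ 2 * ENNReal.ofReal (π⁻¹ * Real.exp (-‖z‖ ^ 2)) := by
          rw [hKint]; ring
end

section
/- Let g = ∑_{n≥2} d_n 1_{A_n} with d_n = n^{5/2} log n and A_n = {z : ||z| - √n| ≤ n^{-9/2}}. Then for every a ∈ ℂ, ∫_ℂ e^{-|z-a|²} |g(z)|² dA(z) < ∞; equivalently, g k_a ∈ L²(μ) for every normalized coherent state k_a(z) = e^{z ā - |a|²/2}. -/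
open MeasureTheory Real ENNReal

lemma gbound15 (g : ℂ → ℝ)
    (hg : ∀ z : ℂ, g z = ∑' n : ℕ,
      if 2 ≤ n ∧ |‖z‖ - Real.sqrt n| ≤ (n : ℝ) ^ (-(9 : ℝ) / 2)
        then (n : ℝ) ^ ((5 : ℝ) / 2) * Real.log n else 0) (z : ℂ) :
    0 ≤ g z ∧ g z ≤ (‖z‖ + 2) ^ 10 := by
  classical
  set f : ℕ → ℝ := fun n =>
    if 2 ≤ n ∧ |‖z‖ - Real.sqrt n| ≤ (n : ℝ) ^ (-(9 : ℝ) / 2)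
      then (n : ℝ) ^ ((5 : ℝ) / 2) * Real.log n else 0 with hfdef
  have hf0 : ∀ n, 0 ≤ f n := by
    intro n
    simp only [hfdef]
    split
    · next h =>
      have h1 : (1 : ℝ) ≤ (n : ℝ) := by exact_mod_cast le_trans (by norm_num) h.1
      exact mul_nonneg (Real.rpow_nonneg (Nat.cast_nonneg n) _) (Real.log_nonneg h1)
    · exact le_rfl
  set N : ℕ := ⌈(‖z‖ + 1) ^ 2⌉₊ with hN
  have hsupp : ∀ n ∉ Finset.range (N + 1), f n = 0 := by
    intro n hn
    simp only [Finset.mem_range, not_lt] at hn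
    simp only [hfdef]
    rw [if_neg]
    rintro ⟨h2, habs⟩
    have h1 : (1 : ℝ) ≤ (n : ℝ) := by exact_mod_cast le_trans (by norm_num) h2
    have hr : (n : ℝ) ^ (-(9 : ℝ) / 2) ≤ 1 :=
      Real.rpow_le_one_of_one_le_of_nonpos h1 (by norm_num)
    have habs' := abs_le.mp habs
    have hsq : Real.sqrt n ≤ ‖z‖ + 1 := by linarith [habs'.1]
    have hn' : (n : ℝ) ≤ (‖z‖ + 1) ^ 2 := by
      have h0 : (0:ℝ) ≤ Real.sqrt n := Real.sqrt_nonneg _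
      nlinarith [Real.sq_sqrt (by positivity : (0:ℝ) ≤ (n:ℝ))]
    have hle : (n : ℝ) ≤ (N : ℝ) := le_trans hn' (Nat.le_ceil _)
    have : n ≤ N := by exact_mod_cast hle
    omega
  have hsum : g z = ∑ n ∈ Finset.range (N + 1), f n := by
    rw [hg z]; exact tsum_eq_sum hsupp
  constructor
  · rw [hsum]; exact Finset.sum_nonneg fun n _ => hf0 n
  · have hbd : ∀ n ∈ Finset.range (N + 1), f n ≤ ((N : ℝ) + 1) ^ 4 := by
      intro n hn
      simp only [Finset.mem_range] at hn
      have hnN : (n : ℝ) ≤ (N : ℝ) + 1 := by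
        have h1 : n ≤ N := Nat.lt_succ_iff.mp hn
        have h2 := (Nat.cast_le (α := ℝ)).mpr h1
        linarith
      have hnn : (0:ℝ) ≤ (n:ℝ) := Nat.cast_nonneg n
      simp only [hfdef]
      split
      · next h =>
        have h1 : (1 : ℝ) ≤ (n : ℝ) := by exact_mod_cast le_trans (by norm_num) h.1
        have hrp : (n : ℝ) ^ ((5 : ℝ)/2) ≤ (n : ℝ) ^ (3 : ℕ) := by
          rw [← Real.rpow_natCast (n : ℝ) 3]
          exact Real.rpow_le_rpow_of_exponent_le h1 (by norm_num)
        have hlog : Real.log n ≤ (n : ℝ) := by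
          have := Real.log_le_sub_one_of_pos (by linarith : (0:ℝ) < (n:ℝ))
          linarith
        calc (n : ℝ) ^ ((5:ℝ)/2) * Real.log n ≤ (n:ℝ)^(3:ℕ) * (n:ℝ) :=
              mul_le_mul hrp hlog (Real.log_nonneg h1) (by positivity)
          _ = (n:ℝ)^(4:ℕ) := by ring
          _ ≤ ((N:ℝ)+1)^(4:ℕ) := pow_le_pow_left₀ hnn hnN 4
      · positivity
    have hs : g z ≤ (N + 1) • (((N : ℝ) + 1) ^ 4) := by
      rw [hsum]
      simpa using Finset.sum_le_card_nsmul (Finset.range (N+1)) f _ hbd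
    have hNle : (N : ℝ) + 1 ≤ (‖z‖ + 2) ^ 2 := by
      have h0 : (0:ℝ) ≤ (‖z‖+1)^2 := by positivity
      have h1 := Nat.ceil_lt_add_one h0
      have hz : (0:ℝ) ≤ ‖z‖ := norm_nonneg z
      rw [← hN] at h1
      nlinarith
    calc g z ≤ (N + 1) • (((N : ℝ) + 1) ^ 4) := hs
      _ = ((N:ℝ)+1)^5 := by rw [nsmul_eq_mul]; push_cast; ring
      _ ≤ ((‖z‖+2)^2)^5 := pow_le_pow_left₀ (by positivity) hNle 5
      _ = (‖z‖+2)^10 := by ring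

set_option maxHeartbeats 1000000 in
/-- For the annuli symbol `g = ∑_{n≥2} d_n 1_{A_n}` with `d_n = n^(5/2) log n` and
`A_n = {z : ||z| - √n| ≤ n^(-9/2)}`, for every `a ∈ ℂ` one has
`∫ e^{-|z-a|²} |g(z)|² dA(z) < ∞`; equivalently `g k_a ∈ L²(μ)` for every coherent
state `k_a`. -/
theorem stmt_15
    (g : ℂ → ℝ)
    (hg : ∀ z : ℂ, g z = ∑' n : ℕ,
      if 2 ≤ n ∧ |‖z‖ - Real.sqrt n| ≤ (n : ℝ) ^ (-(9 : ℝ) / 2)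
        then (n : ℝ) ^ ((5 : ℝ) / 2) * Real.log n else 0)
    (a : ℂ) :
    (∫⁻ z, ENNReal.ofReal (Real.exp (-‖z - a‖ ^ 2) * (g z) ^ 2)
        ∂(volume : Measure ℂ)) < ⊤ := by
  set c : ℝ := ‖a‖ + 2 with hc
  have hc0 : (0:ℝ) ≤ c := by rw [hc]; positivity
  set C : ℝ := 2^20 * ((3628800 : ℝ) * 2^10) + 2^20 * c^20 with hC
  have h0 : Integrable (fun v : ℂ => Real.exp (-(1/2) * ‖v‖ ^ 2)) := by
    have h := (GaussianFourier.integrable_cexp_neg_mul_sq_norm_add (V := ℂ) (b := (1/2 : ℂ))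
      (by norm_num) 0 0).norm
    convert h using 2 with v
    simp only [Complex.norm_exp]
    congr 1
    simp
    norm_cast
  have hIC : Integrable (fun z : ℂ => C * Real.exp (-(1/2) * ‖z - a‖ ^ 2)) :=
    (h0.comp_sub_right a).const_mul C
  have hpt : ∀ z : ℂ, ENNReal.ofReal (Real.exp (-‖z - a‖ ^ 2) * (g z) ^ 2)
      ≤ ENNReal.ofReal (C * Real.exp (-(1/2) * ‖z - a‖ ^ 2)) := by
    intro z
    apply ENNReal.ofReal_le_ofReal
    obtain ⟨hg0, hgu⟩ := gbound15 g hg z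
    set s : ℝ := ‖z - a‖ with hs
    have hs0 : (0:ℝ) ≤ s := norm_nonneg _
    have hzb : ‖z‖ ≤ s + ‖a‖ := by
      calc ‖z‖ = ‖(z - a) + a‖ := by rw [sub_add_cancel]
        _ ≤ ‖z - a‖ + ‖a‖ := norm_add_le _ _
    have hg1 : g z ≤ (s + c)^10 :=
      hgu.trans (pow_le_pow_left₀ (by positivity) (by rw [hc]; linarith) 10)
    have hg2 : (g z)^2 ≤ (s + c)^20 := by
      calc (g z)^2 ≤ ((s+c)^10)^2 := pow_le_pow_left₀ hg0 hg1 2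
        _ = (s+c)^20 := by ring
    have hmax : (s + c)^20 ≤ 2^20 * (s^20 + c^20) := by
      have h1 : s + c ≤ 2 * max s c := by
        rcases le_total s c with h | h
        · rw [max_eq_right h]; linarith
        · rw [max_eq_left h]; linarith
      calc (s+c)^20 ≤ (2 * max s c)^20 := pow_le_pow_left₀ (by positivity) h1 20
        _ = 2^20 * (max s c)^20 := by rw [mul_pow]
        _ ≤ 2^20 * (s^20 + c^20) := by
            have : (max s c)^20 ≤ s^20 + c^20 := by
              rcases le_total s c with h | h
              · rw [max_eq_right h]; nlinarith [pow_nonneg hs0 20]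
              · rw [max_eq_left h]; nlinarith [pow_nonneg hc0 20]
            nlinarith
    have hs20 : s^20 ≤ (3628800 : ℝ) * 2^10 * Real.exp (s^2/2) := by
      have h := Real.pow_div_factorial_le_exp (x := s^2/2) (by positivity) 10
      have h2 : (s^2/2)^10 / (Nat.factorial 10 : ℝ) = s^20 / 3715891200 := by
        rw [div_pow]; norm_num [Nat.factorial]; ring_nf
      rw [h2] at h
      rw [div_le_iff₀ (by norm_num : (0:ℝ) < 3715891200)] at h
      have h210 : (3628800 : ℝ) * 2^10 = 3715891200 := by norm_num
      rw [h210]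
      linarith
    have hE : Real.exp (-s^2) * Real.exp (s^2/2) = Real.exp (-(1/2) * s^2) := by
      rw [← Real.exp_add]; congr 1; ring
    have hle : Real.exp (-s^2) ≤ Real.exp (-(1/2) * s^2) :=
      Real.exp_le_exp.mpr (by nlinarith [sq_nonneg s])
    have hexp0 : (0:ℝ) ≤ Real.exp (-s^2) := (Real.exp_pos _).le
    have step : (g z)^2 ≤ 2^20 * ((3628800 : ℝ) * 2^10 * Real.exp (s^2/2) + c^20) :=
      hg2.trans (hmax.trans (mul_le_mul_of_nonneg_left
        (add_le_add_left hs20 _) (by norm_num)))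
    calc Real.exp (-s^2) * (g z)^2
        ≤ Real.exp (-s^2) * (2^20 * ((3628800 : ℝ) * 2^10 * Real.exp (s^2/2) + c^20)) :=
          mul_le_mul_of_nonneg_left step hexp0
      _ = 2^20 * ((3628800 : ℝ) * 2^10) * (Real.exp (-s^2) * Real.exp (s^2/2))
          + 2^20 * c^20 * Real.exp (-s^2) := by ring
      _ ≤ 2^20 * ((3628800 : ℝ) * 2^10) * Real.exp (-(1/2) * s^2)
          + 2^20 * c^20 * Real.exp (-(1/2) * s^2) := by
          rw [hE]
          have h1 : 2^20 * c^20 * Real.exp (-s^2) ≤ 2^20 * c^20 * Real.exp (-(1/2) * s^2) :=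
            mul_le_mul_of_nonneg_left hle (by positivity)
          linarith
      _ = C * Real.exp (-(1/2) * s^2) := by rw [hC]; ring
  calc (∫⁻ z, ENNReal.ofReal (Real.exp (-‖z - a‖ ^ 2) * (g z) ^ 2) ∂(volume : Measure ℂ))
      ≤ ∫⁻ z, ENNReal.ofReal (C * Real.exp (-(1/2) * ‖z - a‖ ^ 2)) ∂(volume : Measure ℂ) :=
        lintegral_mono hpt
    _ < ⊤ := hIC.lintegral_lt_top
end

section
/- With a_n = √n, ρ_n = n^{-9/2}, φ_n = c/n, and E_n the sector {r e^{iθ} : |r - a_n| ≤ ρ_n, |θ| ≤ φ_n}, there exist n₀ and c₀ > 0 such that for all n ≥ n₀ and all w, ξ ∈ E_n, Re( e^{ξ w̄ - |w|² - |ξ|²} ) ≥ c₀ e^{-a_n²}. -/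
open Real

private lemma aux_pos {n sn ρ r : ℝ} (hsq : sn ^ 2 = n) (hρ1 : ρ ≤ 1)
    (hr_lo : -ρ ≤ r - sn) (hn2 : 2 ≤ n) (hsn0 : 0 ≤ sn) : 0 < r := by
  nlinarith

private lemma aux_prod {n sn ρ r s : ℝ} (hsq : sn ^ 2 = n) (hsn1 : 1 ≤ sn)
    (hρ0 : 0 < ρ) (hρ1 : ρ ≤ 1) (hsr : sn * ρ ≤ 1)
    (hr_lo : -ρ ≤ r - sn) (hr_hi : r - sn ≤ ρ) (hs_lo : -ρ ≤ s - sn) (hs_hi : s - sn ≤ ρ)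
    (hr0 : 0 ≤ r) (hs0 : 0 ≤ s) :
    n - 2 ≤ s * r ∧ s * r ≤ n + 3 ∧ r ^ 2 + s ^ 2 ≤ 2 * n + 6 := by
  have h0 : 0 ≤ sn - ρ := by linarith
  refine ⟨?_, ?_, ?_⟩
  · nlinarith [mul_le_mul (by linarith : sn - ρ ≤ s) (by linarith : sn - ρ ≤ r) h0 hs0,
      sq_nonneg ρ]
  · nlinarith [mul_le_mul (by linarith : s ≤ sn + ρ) (by linarith : r ≤ sn + ρ) hr0
      (by linarith : (0:ℝ) ≤ sn + ρ), sq_nonneg ρ]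
  · nlinarith [mul_le_mul (by linarith : r ≤ sn + ρ) (by linarith : r ≤ sn + ρ) hr0
      (by linarith : (0:ℝ) ≤ sn + ρ),
      mul_le_mul (by linarith : s ≤ sn + ρ) (by linarith : s ≤ sn + ρ) hs0
      (by linarith : (0:ℝ) ≤ sn + ρ), sq_nonneg ρ]

private lemma aux_sq {Δ t : ℝ} (h : |Δ| ≤ 2 * t) : Δ ^ 2 ≤ 4 * t ^ 2 := by
  nlinarith [sq_le_sq' (neg_le_of_abs_le h) (le_of_abs_le h)]

private lemma aux_nd {n c Δ t : ℝ} (ht0 : 0 ≤ t) (htn : t * n = c) (htc : t ≤ c)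
    (hΔ : Δ ^ 2 ≤ 4 * t ^ 2) (hn1 : 1 ≤ n) : n * Δ ^ 2 ≤ 4 * c ^ 2 := by
  have h1 : n * Δ ^ 2 ≤ 4 * t * (t * n) := by
    nlinarith [mul_le_mul_of_nonneg_left hΔ (by linarith : (0:ℝ) ≤ n)]
  rw [htn] at h1
  nlinarith [h1, htc, ht0]

private lemma aux_re {n c sr q Δ C : ℝ} (h1 : n - 2 ≤ sr) (h2 : sr ≤ n + 3) (h3 : q ≤ 2 * n + 6)
    (hsr0 : 0 ≤ sr) (hC : 1 - Δ ^ 2 / 2 ≤ C) (hnd : n * Δ ^ 2 ≤ 4 * c ^ 2) (hc2 : c ^ 2 ≤ 1)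
    (hn1 : 1 ≤ n) : -n - 20 ≤ sr * C - q := by
  have hk : sr - sr * Δ ^ 2 / 2 ≤ sr * C := by
    nlinarith [mul_le_mul_of_nonneg_left hC hsr0]
  have hΔ0 : 0 ≤ Δ ^ 2 := sq_nonneg Δ
  have k2 : sr * Δ ^ 2 ≤ 16 * c ^ 2 := by
    nlinarith [mul_le_mul_of_nonneg_right h2 hΔ0,
      mul_le_mul_of_nonneg_right (by linarith : n + 3 ≤ 4 * n) hΔ0]
  linarith

private lemma aux_im {n c sr t S : ℝ} (h2 : sr ≤ n + 3) (hsr0 : 0 ≤ sr)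
    (hS : S ≤ 2 * t) (hS0 : 0 ≤ S) (ht0 : 0 ≤ t) (htn : t * n = c) (htc : t ≤ c)
    (hcc : c ≤ 1 / 1000) (hn1 : 1 ≤ n) : sr * S ≤ 1 := by
  have h1 : sr * S ≤ (n + 3) * (2 * t) := mul_le_mul h2 hS hS0 (by linarith)
  have h3 : (n + 3) * (2 * t) = 2 * (t * n) + 6 * t := by ring
  rw [htn] at h3
  linarith [h1, h3, htc, ht0]

private lemma aux_c2 {c : ℝ} (hc : 0 < c) (hcc : c ≤ 1 / 1000) : c ^ 2 ≤ 1 := by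
  nlinarith

private lemma aux_cos {x : ℝ} (h : |x| ≤ 1) : 1 / 2 ≤ Real.cos x := by
  have h1 := Real.one_sub_sq_div_two_le_cos (x := x)
  have h2 : x ^ 2 ≤ 1 := by nlinarith [sq_le_sq' (neg_le_of_abs_le h) (le_of_abs_le h)]
  linarith

/-- Kernel lower bound on `E_n × E_n`: with `a_n = √n`, `ρ_n = n^(-9/2)`, `φ_n = c/n`
and `E_n = {r e^{iθ} : |r - a_n| ≤ ρ_n, |θ| ≤ φ_n}` (for a fixed small `c ∈ (0,10⁻³]`),
there exist `n₀` and `c₀ > 0` such that for all `n ≥ n₀` and all `w, ξ ∈ E_n`,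
`Re(e^{ξ w̄ - |w|² - |ξ|²}) ≥ c₀ e^{-a_n²} = c₀ e^{-n}`. -/
theorem stmt_17 (c : ℝ) (hc : 0 < c) (hc' : c ≤ 10 ^ (-(3 : ℤ))) :
    ∃ (n₀ : ℕ) (c₀ : ℝ), 0 < c₀ ∧ ∀ n : ℕ, n₀ ≤ n → ∀ w ξ : ℂ,
      (|‖w‖ - Real.sqrt n| ≤ (n : ℝ) ^ (-(9 : ℝ) / 2) ∧ |Complex.arg w| ≤ c / n) →
      (|‖ξ‖ - Real.sqrt n| ≤ (n : ℝ) ^ (-(9 : ℝ) / 2) ∧ |Complex.arg ξ| ≤ c / n) →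
      c₀ * Real.exp (-(n : ℝ)) ≤
        (Complex.exp (ξ * (starRingEnd ℂ) w - (‖w‖ : ℂ) ^ 2 - (‖ξ‖ : ℂ) ^ 2)).re := by
  refine ⟨2, Real.exp (-20) / 2, by positivity, ?_⟩
  intro n hn w ξ ⟨hw1, hw2⟩ ⟨hξ1, hξ2⟩
  have hcc : c ≤ 1 / 1000 := by norm_num at hc' ⊢; linarith
  have hn2 : (2 : ℝ) ≤ (n : ℝ) := by exact_mod_cast hn
  have hn1 : (1 : ℝ) ≤ (n : ℝ) := by linarith
  have hnpos : (0 : ℝ) < (n : ℝ) := by linarith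
  set ρ : ℝ := (n : ℝ) ^ (-(9 : ℝ) / 2) with hρdef
  have hρpos : 0 < ρ := Real.rpow_pos_of_pos hnpos _
  have hρ1 : ρ ≤ 1 := Real.rpow_le_one_of_one_le_of_nonpos hn1 (by norm_num)
  have hsn : 1 ≤ Real.sqrt n := Real.one_le_sqrt.mpr hn1
  have hsq : Real.sqrt n ^ 2 = (n : ℝ) := Real.sq_sqrt (by positivity)
  have hsr : Real.sqrt n * ρ ≤ 1 := by
    rw [hρdef, Real.sqrt_eq_rpow, ← Real.rpow_add hnpos]
    exact Real.rpow_le_one_of_one_le_of_nonpos hn1 (by norm_num)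
  set r := ‖w‖ with hrdef
  set s := ‖ξ‖ with hsdef
  set α := Complex.arg w with hαdef
  set β := Complex.arg ξ with hβdef
  obtain ⟨hr_lo, hr_hi⟩ := abs_le.mp hw1
  obtain ⟨hs_lo, hs_hi⟩ := abs_le.mp hξ1
  have hr0 : 0 < r := aux_pos hsq hρ1 hr_lo hn2 (Real.sqrt_nonneg _)
  have hs0 : 0 < s := aux_pos hsq hρ1 hs_lo hn2 (Real.sqrt_nonneg _)
  have hw0 : w ≠ 0 := by
    have h : 0 < ‖w‖ := by rw [← hrdef]; exact hr0
    exact norm_pos_iff.mp h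
  have hξ0 : ξ ≠ 0 := by
    have h : 0 < ‖ξ‖ := by rw [← hsdef]; exact hs0
    exact norm_pos_iff.mp h
  have habsw : ‖w‖ ≠ 0 := by
    rw [← hrdef]; exact ne_of_gt hr0
  have habsξ : ‖ξ‖ ≠ 0 := by
    rw [← hsdef]; exact ne_of_gt hs0
  have hwre : w.re = r * Real.cos α := by
    rw [hαdef, Complex.cos_arg hw0, hrdef, mul_comm,
      div_mul_cancel₀ _ habsw]
  have hwim : w.im = r * Real.sin α := by
    rw [hαdef, Complex.sin_arg, hrdef, mul_comm,
      div_mul_cancel₀ _ habsw]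
  have hξre : ξ.re = s * Real.cos β := by
    rw [hβdef, Complex.cos_arg hξ0, hsdef, mul_comm,
      div_mul_cancel₀ _ habsξ]
  have hξim : ξ.im = s * Real.sin β := by
    rw [hβdef, Complex.sin_arg, hsdef, mul_comm,
      div_mul_cancel₀ _ habsξ]
  set z := ξ * (starRingEnd ℂ) w - (‖w‖ : ℂ) ^ 2 - (‖ξ‖ : ℂ) ^ 2 with hzdef
  have hzre : z.re = s * r * Real.cos (β - α) - r ^ 2 - s ^ 2 := by
    simp only [hzdef, Complex.sub_re, Complex.mul_re, Complex.conj_re, Complex.conj_im,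
      ← Complex.ofReal_pow, Complex.ofReal_re, hwre, hwim, hξre, hξim, Real.cos_sub, ← hrdef,
      ← hsdef]
    ring
  have hzim : z.im = s * r * Real.sin (β - α) := by
    simp only [hzdef, Complex.sub_im, Complex.mul_im, Complex.conj_re, Complex.conj_im,
      ← Complex.ofReal_pow, Complex.ofReal_im, hwre, hwim, hξre, hξim, Real.sin_sub, ← hrdef,
      ← hsdef]
    ring
  set Δ := β - α with hΔdef
  set t := c / (n : ℝ) with htdef
  have htpos : 0 < t := by positivity
  have htn : t * (n : ℝ) = c := div_mul_cancel₀ c (ne_of_gt hnpos)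
  have htc : t ≤ c := by
    rw [htdef, div_le_iff₀ hnpos]; exact le_mul_of_one_le_right hc.le hn1
  have hΔ : |Δ| ≤ 2 * t := by
    have h : |β - α| ≤ |β| + |α| := abs_sub β α
    rw [hΔdef]
    linarith only [h, hw2, hξ2]
  have hΔ2 : Δ ^ 2 ≤ 4 * t ^ 2 := aux_sq hΔ
  have hΔsq' : (n : ℝ) * Δ ^ 2 ≤ 4 * c ^ 2 := aux_nd htpos.le htn htc hΔ2 hn1
  obtain ⟨f1, f2, f3⟩ := aux_prod hsq hsn hρpos hρ1 hsr hr_lo hr_hi hs_lo hs_hi hr0.le hs0.le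
  have hsr0 : 0 ≤ s * r := by positivity
  have hc2 : c ^ 2 ≤ 1 := aux_c2 hc hcc
  have hre : -(n : ℝ) - 20 ≤ z.re := by
    rw [hzre]
    have := aux_re f1 f2 f3 hsr0 (Real.one_sub_sq_div_two_le_cos (x := Δ)) hΔsq' hc2 hn1
    linarith only [this]
  have him : |z.im| ≤ 1 := by
    rw [hzim, abs_mul, abs_of_nonneg hsr0]
    exact aux_im f2 hsr0 (Real.abs_sin_le_abs.trans hΔ) (abs_nonneg _) htpos.le htn htc hcc hn1
  have hcos : (1 : ℝ) / 2 ≤ Real.cos z.im := aux_cos him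
  have hexp : Real.exp (-20) * Real.exp (-(n : ℝ)) ≤ Real.exp z.re := by
    rw [← Real.exp_add]
    exact Real.exp_le_exp.mpr (by linarith only [hre])
  rw [show (Complex.exp z).re = Real.exp z.re * Real.cos z.im from Complex.exp_re z]
  calc Real.exp (-20) / 2 * Real.exp (-(n : ℝ))
      = Real.exp (-20) * Real.exp (-(n : ℝ)) * (1 / 2) := by ring
    _ ≤ Real.exp z.re * Real.cos z.im :=
        mul_le_mul hexp hcos (by norm_num) (Real.exp_nonneg _)
end

section
/- For every t > 0 and ξ, z ∈ ℂ, the heat transform of h_ξ(w) = cos(Im(ξ̄ w)) e^{-|w|²} satisfies |(H_t h_ξ)(z)| ≤ β(t) e^{-β(t)|z|²} e^{-α(t)|ξ|²}, where β(t) = (1+4t)^{-1} and α(t) = t(1+4t)^{-1}. Moreover α is strictly increasing on (0,∞). -/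
open MeasureTheory Real

lemma abs_aux (p : ℝ) (hp : 0 < p) (w1 w2 : ℂ) :
    ‖(((p : ℝ) : ℂ) ^ (1/2 : ℂ) * Complex.exp w1) *
      (((p : ℝ) : ℂ) ^ (1/2 : ℂ) * Complex.exp w2)‖ = p * Real.exp (w1.re + w2.re) := by
  rw [norm_mul, norm_mul, norm_mul, Complex.norm_cpow_eq_rpow_re_of_pos hp,
    Complex.norm_exp, Complex.norm_exp, Real.exp_add]
  have : p ^ ((1/2 : ℂ)).re * p ^ ((1/2 : ℂ)).re = p := by
    rw [← Real.rpow_add hp]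
    norm_num
  calc p ^ ((1/2 : ℂ)).re * Real.exp w1.re * (p ^ ((1/2 : ℂ)).re * Real.exp w2.re)
      = (p ^ ((1/2 : ℂ)).re * p ^ ((1/2 : ℂ)).re) * (Real.exp w1.re * Real.exp w2.re) := by ring
    _ = _ := by rw [this]

open Complex in
set_option maxHeartbeats 1000000 in
theorem stmt_18_aux (t : ℝ) (ht : 0 < t) (ξ z : ℂ) :
    |(4 * Real.pi * t)⁻¹ *
        ∫ y, (Real.cos (((starRingEnd ℂ) ξ * y).im) * Real.exp (-‖y‖ ^ 2)) *
          Real.exp (-‖z - y‖ ^ 2 / (4 * t)) ∂(volume : Measure ℂ)| ≤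
      (1 + 4 * t)⁻¹ * Real.exp (-(1 + 4 * t)⁻¹ * ‖z‖ ^ 2) *
        Real.exp (-(t * (1 + 4 * t)⁻¹) * ‖ξ‖ ^ 2) := by
  have htne : (t : ℂ) ≠ 0 := by exact_mod_cast ht.ne'
  set cr : ℝ := 1 + (4 * t)⁻¹ with hcr_def
  have hcr : 0 < cr := by positivity
  have hcrne : (cr : ℂ) ≠ 0 := by exact_mod_cast hcr.ne'
  set b : ℂ := -(cr : ℂ) with hb_def
  have hb : b.re < 0 := by simpa [hb_def] using hcr
  set c1 : ℂ := ((z.re / (2 * t) : ℝ) : ℂ) - (ξ.im : ℂ) * Complex.I with hc1_def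
  set d1 : ℂ := ((-(z.re ^ 2) / (4 * t) : ℝ) : ℂ) with hd1_def
  set c2 : ℂ := ((z.im / (2 * t) : ℝ) : ℂ) + (ξ.re : ℂ) * Complex.I with hc2_def
  set d2 : ℂ := ((-(z.im ^ 2) / (4 * t) : ℝ) : ℂ) with hd2_def
  set f : ℝ → ℂ := fun x => Complex.exp (b * x ^ 2 + c1 * x + d1) with hf_def
  set g : ℝ → ℂ := fun x => Complex.exp (b * x ^ 2 + c2 * x + d2) with hg_def
  have hfint : Integrable f := integrable_cexp_quadratic' hb c1 d1
  have hgint : Integrable g := integrable_cexp_quadratic' hb c2 d2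
  -- pointwise identity
  have hpt : ∀ p : ℝ × ℝ,
      (Real.cos (((starRingEnd ℂ) ξ * (measurableEquivRealProd.symm p)).im) *
        Real.exp (-‖(measurableEquivRealProd.symm p : ℂ)‖ ^ 2)) *
        Real.exp (-‖z - measurableEquivRealProd.symm p‖ ^ 2 / (4 * t)) =
      (f p.1 * g p.2).re := by
    intro ⟨x, v⟩
    simp only [measurableEquivRealProd_symm_apply]
    rw [hf_def, hg_def]
    simp only []
    rw [← Complex.exp_add, Complex.exp_re]
    have hS : b * (x:ℂ) ^ 2 + c1 * x + d1 + (b * (v:ℂ) ^ 2 + c2 * v + d2)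
        = ((-(x ^ 2 + v ^ 2) + -((z.re - x) ^ 2 + (z.im - v) ^ 2) / (4 * t) : ℝ) : ℂ)
          + ((ξ.re * v - ξ.im * x : ℝ) : ℂ) * Complex.I := by
      rw [hb_def, hc1_def, hd1_def, hc2_def, hd2_def, hcr_def]
      push_cast
      field_simp
      ring
    rw [hS]
    simp only [Complex.add_re, Complex.add_im, Complex.ofReal_re, Complex.ofReal_im,
      Complex.mul_re, Complex.mul_im, Complex.I_re, Complex.I_im]
    have hnorm1 : ‖({re := x, im := v} : ℂ)‖ ^ 2 = x ^ 2 + v ^ 2 := by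
      rw [Complex.sq_norm, Complex.normSq_apply]; ring
    have hnorm2 : ‖z - ({re := x, im := v} : ℂ)‖ ^ 2 = (z.re - x) ^ 2 + (z.im - v) ^ 2 := by
      rw [Complex.sq_norm, Complex.normSq_apply]
      simp [Complex.sub_re, Complex.sub_im]; ring
    have him : ((starRingEnd ℂ) ξ * ({re := x, im := v} : ℂ)).im = ξ.re * v - ξ.im * x := by
      simp [Complex.mul_im]; ring
    rw [hnorm1, hnorm2]
    simp only [Complex.conj_re, Complex.conj_im, mul_zero, zero_mul, mul_one, sub_zero,
      zero_add, add_zero]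
    rw [Real.exp_add]
    ring_nf
  -- rewrite the integral
  have hI : (∫ y, (Real.cos (((starRingEnd ℂ) ξ * y).im) * Real.exp (-‖y‖ ^ 2)) *
          Real.exp (-‖z - y‖ ^ 2 / (4 * t)) ∂(volume : Measure ℂ))
      = ((∫ x : ℝ, f x) * ∫ x : ℝ, g x).re := by
    rw [← (Complex.volume_preserving_equiv_real_prod.symm).integral_comp
      Complex.measurableEquivRealProd.symm.measurableEmbedding]
    rw [show (volume : Measure (ℝ × ℝ)) = (volume : Measure ℝ).prod volume from
      (MeasureTheory.Measure.volume_eq_prod ℝ ℝ)]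
    rw [← integral_prod_mul f g]
    have hint2 := integral_re (hfint.mul_prod hgint)
    simp only [RCLike.re_to_complex] at hint2
    rw [← hint2]
    exact integral_congr_ae (Filter.Eventually.of_forall hpt)
  rw [hI]
  rw [abs_mul, abs_of_pos (by positivity : (0:ℝ) < (4 * Real.pi * t)⁻¹)]
  have hval : ‖(∫ x : ℝ, f x) * ∫ x : ℝ, g x‖
      = (Real.pi / cr) * Real.exp ((d1 - c1^2/(4*b)).re + (d2 - c2^2/(4*b)).re) := by
    rw [hf_def, hg_def, integral_cexp_quadratic hb c1 d1, integral_cexp_quadratic hb c2 d2]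
    have hnb : (↑Real.pi / -b) = ((Real.pi / cr : ℝ) : ℂ) := by
      rw [hb_def]; push_cast; ring
    rw [hnb]
    exact abs_aux (Real.pi / cr) (by positivity) _ _
  have hBre : |((∫ x : ℝ, f x) * ∫ x : ℝ, g x).re| ≤
      ‖(∫ x : ℝ, f x) * ∫ x : ℝ, g x‖ := Complex.abs_re_le_norm _
  calc (4 * Real.pi * t)⁻¹ * |((∫ x : ℝ, f x) * ∫ x : ℝ, g x).re|
      ≤ (4 * Real.pi * t)⁻¹ * ((Real.pi / cr) *
          Real.exp ((d1 - c1^2/(4*b)).re + (d2 - c2^2/(4*b)).re)) := by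
        rw [← hval]; gcongr
    _ = (1 + 4 * t)⁻¹ * Real.exp (-(1 + 4 * t)⁻¹ * ‖z‖ ^ 2) *
        Real.exp (-(t * (1 + 4 * t)⁻¹) * ‖ξ‖ ^ 2) := by
        have h1t : (0:ℝ) < 1 + 4 * t := by positivity
        have hc1re : (c1 ^ 2).re = (z.re/(2*t))^2 - ξ.im^2 := by
          rw [hc1_def]
          simp only [pow_two, Complex.mul_re, Complex.mul_im, Complex.sub_re, Complex.sub_im,
            Complex.ofReal_re, Complex.ofReal_im, Complex.I_re, Complex.I_im]
          ring
        have hc2re : (c2 ^ 2).re = (z.im/(2*t))^2 - ξ.re^2 := by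
          rw [hc2_def]
          simp only [pow_two, Complex.mul_re, Complex.mul_im, Complex.add_re, Complex.add_im,
            Complex.ofReal_re, Complex.ofReal_im, Complex.I_re, Complex.I_im]
          ring
        have h4b : (4:ℂ) * b = ((-(4*cr) : ℝ) : ℂ) := by rw [hb_def]; push_cast; ring
        have hre1 : (d1 - c1^2/(4*b)).re
            = -(z.re^2)/(4*t) - ((z.re/(2*t))^2 - ξ.im^2)/(-(4*cr)) := by
          rw [h4b, Complex.sub_re, Complex.div_ofReal_re, hc1re, hd1_def, Complex.ofReal_re]
        have hre2 : (d2 - c2^2/(4*b)).re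
            = -(z.im^2)/(4*t) - ((z.im/(2*t))^2 - ξ.re^2)/(-(4*cr)) := by
          rw [h4b, Complex.sub_re, Complex.div_ofReal_re, hc2re, hd2_def, Complex.ofReal_re]
        rw [hre1, hre2]
        have hz : ‖z‖ ^ 2 = z.re ^ 2 + z.im ^ 2 := by
          rw [Complex.sq_norm, Complex.normSq_apply]; ring
        have hxi : ‖ξ‖ ^ 2 = ξ.re ^ 2 + ξ.im ^ 2 := by
          rw [Complex.sq_norm, Complex.normSq_apply]; ring
        have hre : (-(z.re^2)/(4*t) - ((z.re/(2*t))^2 - ξ.im^2)/(-(4*cr)))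
            + (-(z.im^2)/(4*t) - ((z.im/(2*t))^2 - ξ.re^2)/(-(4*cr)))
            = -(1 + 4 * t)⁻¹ * ‖z‖ ^ 2 + -(t * (1 + 4 * t)⁻¹) * ‖ξ‖ ^ 2 := by
          rw [hz, hxi, hcr_def]
          have hne1 : (4:ℝ) * t ≠ 0 := by positivity
          have hne2 : (1:ℝ) + 4 * t ≠ 0 := h1t.ne'
          field_simp
          ring
        rw [hre, Real.exp_add]
        have hcoef : (4 * Real.pi * t)⁻¹ * (Real.pi / cr) = (1 + 4 * t)⁻¹ := by
          rw [hcr_def]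
          rw [div_eq_mul_inv, mul_inv, mul_inv]
          field_simp
          ring
        rw [← mul_assoc, hcoef]
        ring

/-- For every `t > 0` and `ξ, z ∈ ℂ`, the heat transform of the modulated Gaussian
`h_ξ(w) = cos(Im(ξ̄ w)) e^{-|w|²}` satisfies
`|(H_t h_ξ)(z)| ≤ β(t) e^{-β(t)|z|²} e^{-α(t)|ξ|²}` with `β(t) = (1+4t)⁻¹`,
`α(t) = t(1+4t)⁻¹`; moreover `α` is strictly increasing on `(0,∞)`. -/
theorem stmt_18 (t : ℝ) (ht : 0 < t) (ξ z : ℂ) :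
    |(4 * Real.pi * t)⁻¹ *
        ∫ y, (Real.cos (((starRingEnd ℂ) ξ * y).im) * Real.exp (-‖y‖ ^ 2)) *
          Real.exp (-‖z - y‖ ^ 2 / (4 * t)) ∂(volume : Measure ℂ)| ≤
      (1 + 4 * t)⁻¹ * Real.exp (-(1 + 4 * t)⁻¹ * ‖z‖ ^ 2) *
        Real.exp (-(t * (1 + 4 * t)⁻¹) * ‖ξ‖ ^ 2) ∧
    StrictMonoOn (fun s : ℝ => s * (1 + 4 * s)⁻¹) (Set.Ioi (0 : ℝ)) := by
  refine ⟨stmt_18_aux t ht ξ z, ?_⟩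
  intro a ha b hb hab
  simp only [Set.mem_Ioi] at ha hb
  have h1 : (0:ℝ) < 1 + 4 * a := by linarith
  have h2 : (0:ℝ) < 1 + 4 * b := by linarith
  simp only [← div_eq_mul_inv]
  rw [div_lt_div_iff₀ h1 h2]
  nlinarith
end

section
/- Fix 0 < t₁ < t₀. There exists a real-valued measurable function g on ℂ such that (1) g k_a ∈ L²(μ) for every a ∈ ℂ, where k_a(z) = e^{z ā - |a|²/2} and dμ = π^{-1}e^{-|z|²}dA; (2) the heat transform H_{t₀} g is bounded on ℂ; (3) the heat transform H_{t₁} g is unbounded on ℂ. -/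
open MeasureTheory Real ENNReal

/-- The heat transform at time `t > 0` of `g : ℂ → ℝ`: convolution with the Gaussian
heat kernel `(4πt)⁻¹ e^{-|x|²/(4t)}` on `ℂ ≅ ℝ²`. -/
noncomputable def heatTransform (t : ℝ) (g : ℂ → ℝ) (z : ℂ) : ℝ :=
  (4 * Real.pi * t)⁻¹ *
    ∫ y, g y * Real.exp (-‖z - y‖ ^ 2 / (4 * t)) ∂(volume : Measure ℂ)

namespace Stmt19

noncomputable def g1 (c β u : ℝ) : ℝ := Real.exp (c * u ^ 2) * Real.cos (β * u ^ 2)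

noncomputable def gfun (c β : ℝ) (z : ℂ) : ℝ := g1 c β z.re

noncomputable def bb (t c β : ℝ) : ℂ := ((c - 1 / (4 * t) : ℝ) : ℂ) + (β : ℝ) * Complex.I

noncomputable def CC (t c β : ℝ) : ℂ := ((Real.pi : ℂ) / -(bb t c β)) ^ (1 / 2 : ℂ)

noncomputable def ww (t c β : ℝ) : ℂ :=
  -((1 / (4 * t) : ℝ) : ℂ) - (((16 * t ^ 2 : ℝ) : ℂ) * bb t c β)⁻¹

noncomputable def KK (t : ℝ) : ℝ :=
  (4 * Real.pi * t)⁻¹ * Real.sqrt (Real.pi / (1 / (4 * t)))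

@[simp] lemma bb_re (t c β : ℝ) : (bb t c β).re = c - 1 / (4 * t) := by simp [bb]

@[simp] lemma bb_im (t c β : ℝ) : (bb t c β).im = β := by simp [bb]

lemma integrable_exp_rquad (b p q : ℝ) (hb : b < 0) :
    Integrable fun x : ℝ => Real.exp (b * x ^ 2 + p * x + q) := by
  have h := (integrable_cexp_quadratic' (b := (b : ℂ)) (by simpa using hb) (p : ℂ) (q : ℂ)).norm
  refine h.congr (Filter.Eventually.of_forall fun x => ?_)
  have h1 : ((b : ℂ) * (x : ℂ) ^ 2 + (p : ℂ) * (x : ℂ) + (q : ℂ))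
      = ((b * x ^ 2 + p * x + q : ℝ) : ℂ) := by push_cast; ring
  simp only [h1, Complex.norm_exp, Complex.ofReal_re]


lemma heat_eval (t c β : ℝ) (ht : 0 < t) (hcs : c < 1 / (4 * t)) (z : ℂ) :
    heatTransform t (gfun c β) z
      = KK t * (CC t c β * Complex.exp (ww t c β * ((z.re : ℂ)) ^ 2)).re := by
  have htne : (t : ℝ) ≠ 0 := ht.ne'
  have hbneg : (bb t c β).re < 0 := by rw [bb_re]; linarith
  have hbne : bb t c β ≠ 0 := by
    intro h; rw [h] at hbneg; simp at hbneg
  set x : ℝ := z.re with hx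
  set pp : ℝ := x / (2 * t) with hpp
  set qq : ℝ := -(x ^ 2 / (4 * t)) with hqq
  have key : ∀ p : ℝ × ℝ,
      gfun c β (Complex.measurableEquivRealProd.symm p) *
        Real.exp (-‖z - Complex.measurableEquivRealProd.symm p‖ ^ 2 / (4 * t))
      = (Complex.exp (bb t c β * (p.1 : ℂ) ^ 2 + (pp : ℂ) * (p.1 : ℂ) + (qq : ℂ))).re *
        Real.exp (-(1 / (4 * t)) * (p.2 - z.im) ^ 2) := by
    rintro ⟨u, v⟩
    simp only [Complex.measurableEquivRealProd_symm_apply]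
    have hnrm : ‖z - ({ re := u, im := v } : ℂ)‖ ^ 2 = (z.re - u) ^ 2 + (z.im - v) ^ 2 := by
      rw [Complex.sq_norm, Complex.normSq_apply]
      simp [Complex.sub_re, Complex.sub_im]
      ring
    have hre' : (bb t c β * (u : ℂ) ^ 2 + (pp : ℂ) * (u : ℂ) + (qq : ℂ))
        = (((c - 1 / (4 * t)) * u ^ 2 + pp * u + qq : ℝ) : ℂ)
          + ((β * u ^ 2 : ℝ) : ℂ) * Complex.I := by
      simp only [bb]; push_cast; ring
    rw [hnrm, hre', Complex.exp_re]
    simp only [Complex.add_re, Complex.add_im, Complex.ofReal_re, Complex.ofReal_im,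
      Complex.mul_re, Complex.mul_im, Complex.I_re, Complex.I_im, mul_zero, mul_one,
      zero_mul, sub_zero, zero_add, add_zero, gfun, g1]
    have h2 : Real.exp (c * u ^ 2) *
          Real.exp (-((z.re - u) ^ 2 + (z.im - v) ^ 2) / (4 * t))
        = Real.exp ((c - 1 / (4 * t)) * u ^ 2 + pp * u + qq) *
          Real.exp (-(1 / (4 * t)) * (v - z.im) ^ 2) := by
      rw [← Real.exp_add, ← Real.exp_add]
      congr 1
      rw [hpp, hqq]
      field_simp
      ring
    -- target is product with cos factor
    linear_combination Real.cos (β * u ^ 2) * h2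
  rw [heatTransform]
  rw [← (Complex.volume_preserving_equiv_real_prod.symm).integral_comp
      Complex.measurableEquivRealProd.symm.measurableEmbedding
      (fun y => gfun c β y * Real.exp (-‖z - y‖ ^ 2 / (4 * t)))]
  simp only [key]
  rw [MeasureTheory.Measure.volume_eq_prod ℝ ℝ,
    MeasureTheory.integral_prod_mul
      (fun u : ℝ => (Complex.exp (bb t c β * (u : ℂ) ^ 2 + (pp : ℂ) * (u : ℂ) + (qq : ℂ))).re)
      (fun v : ℝ => Real.exp (-(1 / (4 * t)) * (v - z.im) ^ 2))]
  have hGauss : (∫ v : ℝ, Real.exp (-(1 / (4 * t)) * (v - z.im) ^ 2))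
      = Real.sqrt (Real.pi / (1 / (4 * t))) := by
    rw [integral_sub_right_eq_self (fun v => Real.exp (-(1 / (4 * t)) * v ^ 2)) z.im]
    exact integral_gaussian (1 / (4 * t))
  have hInt : Integrable fun u : ℝ =>
      Complex.exp (bb t c β * (u : ℂ) ^ 2 + (pp : ℂ) * (u : ℂ) + (qq : ℂ)) :=
    integrable_cexp_quadratic' hbneg _ _
  have hre2 : (∫ u : ℝ, (Complex.exp (bb t c β * (u : ℂ) ^ 2 + (pp : ℂ) * (u : ℂ) + (qq : ℂ))).re)
      = (∫ u : ℝ, Complex.exp (bb t c β * (u : ℂ) ^ 2 + (pp : ℂ) * (u : ℂ) + (qq : ℂ))).re := by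
    simpa using integral_re hInt
  rw [hre2, integral_cexp_quadratic hbneg, hGauss]
  have hexp : (qq : ℂ) - (pp : ℂ) ^ 2 / (4 * bb t c β) = ww t c β * (x : ℂ) ^ 2 := by
    rw [ww, hpp, hqq]
    have htC : (t : ℂ) ≠ 0 := by exact_mod_cast htne
    push_cast
    field_simp [htC, hbne]
    ring
  rw [hexp, KK, CC]
  ring


lemma continuous_g1 (c β : ℝ) : Continuous (g1 c β) := by
  unfold g1; fun_prop

lemma measurable_gfun (c β : ℝ) : Measurable (gfun c β) :=
  ((continuous_g1 c β).comp Complex.continuous_re).measurable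

lemma norm_sq_eq (w : ℂ) : ‖w‖ ^ 2 = w.re ^ 2 + w.im ^ 2 := by
  rw [Complex.sq_norm, Complex.normSq_apply]; ring

lemma cond1 (c β : ℝ) (hc : c < 1 / 2) (a : ℂ) :
    (∫⁻ z, ENNReal.ofReal (Real.exp (-‖z - a‖ ^ 2) * (gfun c β z) ^ 2)
      ∂(volume : Measure ℂ)) < ⊤ := by
  have hF : Integrable fun u : ℝ => Real.exp (-(u - a.re) ^ 2) * (g1 c β u) ^ 2 := by
    refine (integrable_exp_rquad (2 * c - 1) (2 * a.re) (-(a.re ^ 2)) (by linarith)).mono'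
      (Continuous.aestronglyMeasurable (by unfold g1; fun_prop))
      (Filter.Eventually.of_forall fun u => ?_)
    rw [Real.norm_eq_abs, abs_of_nonneg (by positivity)]
    have h1 : (g1 c β u) ^ 2 ≤ Real.exp (2 * c * u ^ 2) := by
      rw [g1, mul_pow]
      have h2 : Real.exp (c * u ^ 2) ^ 2 = Real.exp (2 * c * u ^ 2) := by
        rw [sq, ← Real.exp_add]; ring_nf
      calc Real.exp (c * u ^ 2) ^ 2 * Real.cos (β * u ^ 2) ^ 2
          ≤ Real.exp (c * u ^ 2) ^ 2 * 1 :=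
            mul_le_mul_of_nonneg_left (Real.cos_sq_le_one _) (by positivity)
        _ = Real.exp (2 * c * u ^ 2) := by rw [mul_one, h2]
    calc Real.exp (-(u - a.re) ^ 2) * (g1 c β u) ^ 2
        ≤ Real.exp (-(u - a.re) ^ 2) * Real.exp (2 * c * u ^ 2) :=
          mul_le_mul_of_nonneg_left h1 (Real.exp_pos _).le
      _ = Real.exp ((2 * c - 1) * u ^ 2 + 2 * a.re * u + -(a.re ^ 2)) := by
          rw [← Real.exp_add]; congr 1; ring
  have hG : Integrable fun v : ℝ => Real.exp (-(v - a.im) ^ 2) := by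
    have h0 : (fun v : ℝ => Real.exp (-(v - a.im) ^ 2))
        = fun v : ℝ => Real.exp ((-1) * v ^ 2 + 2 * a.im * v + -(a.im ^ 2)) := by
      funext v; congr 1; ring
    rw [h0]
    exact integrable_exp_rquad (-1) (2 * a.im) (-(a.im ^ 2)) (by norm_num)
  have hmaj : Integrable fun z : ℂ => Real.exp (-‖z - a‖ ^ 2) * (gfun c β z) ^ 2 := by
    rw [← MeasurePreserving.integrable_comp_emb
      Complex.volume_preserving_equiv_real_prod.symm
      (MeasurableEquiv.measurableEmbedding _)]
    have heq : ((fun z : ℂ => Real.exp (-‖z - a‖ ^ 2) * (gfun c β z) ^ 2) ∘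
        Complex.measurableEquivRealProd.symm)
        = fun p : ℝ × ℝ =>
          (Real.exp (-(p.1 - a.re) ^ 2) * (g1 c β p.1) ^ 2) * Real.exp (-(p.2 - a.im) ^ 2) := by
      funext p
      simp only [Function.comp, Complex.measurableEquivRealProd_symm_apply, gfun]
      have hnrm : ‖({ re := p.1, im := p.2 } : ℂ) - a‖ ^ 2
          = (p.1 - a.re) ^ 2 + (p.2 - a.im) ^ 2 := by
        rw [norm_sq_eq]; simp [Complex.sub_re, Complex.sub_im]
      rw [hnrm, show -((p.1 - a.re) ^ 2 + (p.2 - a.im) ^ 2)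
          = (-(p.1 - a.re) ^ 2) + (-(p.2 - a.im) ^ 2) by ring, Real.exp_add]
      ring
    rw [heq, MeasureTheory.Measure.volume_eq_prod ℝ ℝ]
    exact hF.mul_prod hG
  refine lt_of_le_of_lt (MeasureTheory.lintegral_mono fun z => ?_) hmaj.2
  exact Real.ofReal_le_enorm _


lemma ww_split (t c β : ℝ) (ht : 0 < t) :
    ww t c β = -((1 / (4 * t) : ℝ) : ℂ) - (((16 * t ^ 2)⁻¹ : ℝ) : ℂ) * (bb t c β)⁻¹ := by
  rw [ww, mul_inv]
  push_cast
  ring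

lemma ww_im_eq (t c β : ℝ) (ht : 0 < t) :
    (ww t c β).im = (16 * t ^ 2)⁻¹ * (β / ((c - 1 / (4 * t)) ^ 2 + β ^ 2)) := by
  obtain ⟨r, hr⟩ : ∃ r : ℝ, r = (16 * t ^ 2)⁻¹ := ⟨_, rfl⟩
  rw [ww_split t c β ht, ← hr]
  simp only [Complex.sub_im, Complex.neg_im, Complex.ofReal_im, Complex.mul_im,
    Complex.ofReal_re, Complex.inv_im, Complex.inv_re, Complex.normSq_apply,
    bb_re, bb_im, zero_mul, mul_zero, add_zero, zero_add, neg_zero]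
  ring

lemma ww_re_eq (t c β : ℝ) (ht : 0 < t) :
    (ww t c β).re = -(1 / (4 * t)) +
      (16 * t ^ 2)⁻¹ * ((1 / (4 * t) - c) / ((c - 1 / (4 * t)) ^ 2 + β ^ 2)) := by
  obtain ⟨r, hr⟩ : ∃ r : ℝ, r = (16 * t ^ 2)⁻¹ := ⟨_, rfl⟩
  rw [ww_split t c β ht, ← hr]
  simp only [Complex.sub_re, Complex.neg_re, Complex.ofReal_re, Complex.mul_re,
    Complex.ofReal_im, Complex.inv_im, Complex.inv_re, Complex.normSq_apply,
    bb_re, bb_im, zero_mul, mul_zero, add_zero, zero_add, neg_zero, sub_zero]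
  ring

lemma ww_im_pos (t c β : ℝ) (ht : 0 < t) (hβ : 0 < β) : 0 < (ww t c β).im := by
  rw [ww_im_eq t c β ht]
  have hD : 0 < (c - 1 / (4 * t)) ^ 2 + β ^ 2 :=
    add_pos_of_nonneg_of_pos (sq_nonneg _) (pow_pos hβ 2)
  have h16 : 0 < (16 * t ^ 2 : ℝ) := by positivity
  exact mul_pos (inv_pos.mpr h16) (div_pos hβ hD)

lemma ww_re_pos (t c β : ℝ) (ht : 0 < t) (hβ : 0 < β)
    (h : c ^ 2 + β ^ 2 < (1 / (4 * t)) * c) : 0 < (ww t c β).re := by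
  rw [ww_re_eq t c β ht]
  set s : ℝ := 1 / (4 * t) with hs
  have hspos : 0 < s := by positivity
  have hs2 : (16 * t ^ 2)⁻¹ = s ^ 2 := by
    rw [hs]; field_simp; ring
  have hD : 0 < (c - s) ^ 2 + β ^ 2 :=
    add_pos_of_nonneg_of_pos (sq_nonneg _) (pow_pos hβ 2)
  rw [hs2]
  rw [show -s + s ^ 2 * ((s - c) / ((c - s) ^ 2 + β ^ 2))
      = s * ((s * c - (c ^ 2 + β ^ 2)) / ((c - s) ^ 2 + β ^ 2)) by field_simp; ring]
  exact mul_pos hspos (div_pos (by linarith) hD)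

lemma ww_re_neg (t c β : ℝ) (ht : 0 < t) (hβ : 0 < β)
    (h : (1 / (4 * t)) * c < c ^ 2 + β ^ 2) : (ww t c β).re < 0 := by
  rw [ww_re_eq t c β ht]
  set s : ℝ := 1 / (4 * t) with hs
  have hspos : 0 < s := by positivity
  have hs2 : (16 * t ^ 2)⁻¹ = s ^ 2 := by
    rw [hs]; field_simp; ring
  have hD : 0 < (c - s) ^ 2 + β ^ 2 :=
    add_pos_of_nonneg_of_pos (sq_nonneg _) (pow_pos hβ 2)
  rw [hs2]
  rw [show -s + s ^ 2 * ((s - c) / ((c - s) ^ 2 + β ^ 2))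
      = s * ((s * c - (c ^ 2 + β ^ 2)) / ((c - s) ^ 2 + β ^ 2)) by field_simp; ring]
  have : (s * c - (c ^ 2 + β ^ 2)) / ((c - s) ^ 2 + β ^ 2) < 0 :=
    div_neg_of_neg_of_pos (by linarith) hD
  exact mul_neg_of_pos_of_neg hspos this

end Stmt19


open Stmt19

/-- Irreversibility of heat flow: for `0 < t₁ < t₀` there is a real-valued measurable
`g` on `ℂ` such that (1) `g k_a ∈ L²(μ)` for every coherent state `k_a`, i.e.
`∫ e^{-|z-a|²} |g(z)|² dA(z) < ∞` for all `a`; (2) `H_{t₀} g` is bounded on `ℂ`;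
(3) `H_{t₁} g` is unbounded on `ℂ`. -/
theorem stmt_19 (t₀ t₁ : ℝ) (ht₁ : 0 < t₁) (ht : t₁ < t₀) :
    ∃ g : ℂ → ℝ, Measurable g ∧
      (∀ a : ℂ, (∫⁻ z, ENNReal.ofReal (Real.exp (-‖z - a‖ ^ 2) * (g z) ^ 2)
          ∂(volume : Measure ℂ)) < ⊤) ∧
      (∃ M : ℝ, ∀ z : ℂ, |heatTransform t₀ g z| ≤ M) ∧
      ¬ (∃ M : ℝ, ∀ z : ℂ, |heatTransform t₁ g z| ≤ M) := by
  have ht₀ : 0 < t₀ := ht₁.trans ht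
  set t' : ℝ := (t₀ + t₁) / 2 with ht'
  have ht'pos : 0 < t' := by rw [ht']; linarith
  have ht'1 : t₁ < t' := by rw [ht']; linarith
  have ht'0 : t' < t₀ := by rw [ht']; linarith
  set c : ℝ := min (1 / 4) (1 / (8 * t₀)) with hc
  have hc0 : 0 < c := lt_min (by norm_num) (by positivity)
  have hchalf : c < 1 / 2 := lt_of_le_of_lt (min_le_left _ _) (by norm_num)
  have hct₀ : c < 1 / (4 * t₀) := by
    refine lt_of_le_of_lt (min_le_right _ _) ?_
    rw [div_lt_div_iff₀ (by linarith) (by linarith)]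
    linarith
  have hinv01 : 1 / (4 * t₀) < 1 / (4 * t') := by
    rw [div_lt_div_iff₀ (by linarith) (by linarith)]; linarith
  have hinv12 : 1 / (4 * t') < 1 / (4 * t₁) := by
    rw [div_lt_div_iff₀ (by linarith) (by linarith)]; linarith
  have hct' : c < 1 / (4 * t') := hct₀.trans hinv01
  have hct₁ : c < 1 / (4 * t₁) := hct'.trans hinv12
  set β : ℝ := Real.sqrt (c * (1 / (4 * t') - c)) with hβ
  have hβarg : 0 < c * (1 / (4 * t') - c) := mul_pos hc0 (by linarith)
  have hβpos : 0 < β := Real.sqrt_pos.mpr hβarg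
  have hβsq : β ^ 2 = c * (1 / (4 * t') - c) := Real.sq_sqrt hβarg.le
  have hsum : c ^ 2 + β ^ 2 = c * (1 / (4 * t')) := by rw [hβsq]; ring
  refine ⟨gfun c β, measurable_gfun c β, fun a => cond1 c β hchalf a, ?_, ?_⟩
  · -- bounded at t₀
    have hwre : (ww t₀ c β).re < 0 := by
      refine ww_re_neg t₀ c β ht₀ hβpos ?_
      rw [hsum]
      have := mul_lt_mul_of_pos_left hinv01 hc0
      linarith
    have hKpos : 0 < KK t₀ := by
      rw [KK]
      have h1 : 0 < 4 * Real.pi * t₀ := by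
        have := Real.pi_pos; nlinarith
      have h2 : 0 < Real.pi / (1 / (4 * t₀)) := by
        apply div_pos Real.pi_pos; positivity
      exact mul_pos (inv_pos.mpr h1) (Real.sqrt_pos.mpr h2)
    refine ⟨KK t₀ * ‖CC t₀ c β‖, fun z => ?_⟩
    rw [heat_eval t₀ c β ht₀ hct₀ z]
    rw [abs_mul, abs_of_pos hKpos]
    refine mul_le_mul_of_nonneg_left ?_ hKpos.le
    calc |(CC t₀ c β * Complex.exp (ww t₀ c β * ((z.re : ℂ)) ^ 2)).re|
        ≤ ‖CC t₀ c β * Complex.exp (ww t₀ c β * ((z.re : ℂ)) ^ 2)‖ :=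
          Complex.abs_re_le_norm _
      _ = ‖CC t₀ c β‖ *
            Real.exp ((ww t₀ c β * ((z.re : ℂ)) ^ 2).re) := by
          rw [norm_mul, Complex.norm_exp]
      _ ≤ ‖CC t₀ c β‖ * 1 := by
          refine mul_le_mul_of_nonneg_left ?_ (norm_nonneg _)
          rw [Real.exp_le_one_iff]
          have h3 : ((z.re : ℂ)) ^ 2 = ((z.re ^ 2 : ℝ) : ℂ) := by push_cast; ring
          rw [h3, Complex.mul_re, Complex.ofReal_re, Complex.ofReal_im, mul_zero, sub_zero]
          exact mul_nonpos_of_nonpos_of_nonneg hwre.le (sq_nonneg _)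
      _ = ‖CC t₀ c β‖ := mul_one _
  · -- unbounded at t₁
    rintro ⟨M, hM⟩
    have hwre : 0 < (ww t₁ c β).re := by
      refine ww_re_pos t₁ c β ht₁ hβpos ?_
      rw [hsum]
      have := mul_lt_mul_of_pos_left hinv12 hc0
      linarith
    have hwim : 0 < (ww t₁ c β).im := ww_im_pos t₁ c β ht₁ hβpos
    have hbneg : (bb t₁ c β).re < 0 := by rw [bb_re]; linarith
    have hbne : bb t₁ c β ≠ 0 := by
      intro h; rw [h] at hbneg; simp at hbneg
    have hCCne : CC t₁ c β ≠ 0 := by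
      rw [CC, Ne, Complex.cpow_eq_zero_iff]
      rintro ⟨h1, -⟩
      exact (div_ne_zero (by exact_mod_cast Real.pi_ne_zero) (neg_ne_zero.mpr hbne)) h1
    set A : ℝ := ‖CC t₁ c β‖ with hA
    have hApos : 0 < A := norm_pos_iff.mpr hCCne
    set ρ : ℝ := (ww t₁ c β).re with hρ
    set σ : ℝ := (ww t₁ c β).im with hσ
    set θ : ℝ := Complex.arg (CC t₁ c β) with hθ
    have hKpos : 0 < KK t₁ := by
      rw [KK]
      have h1 : 0 < 4 * Real.pi * t₁ := by
        have := Real.pi_pos; nlinarith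
      have h2 : 0 < Real.pi / (1 / (4 * t₁)) := by
        apply div_pos Real.pi_pos; positivity
      exact mul_pos (inv_pos.mpr h1) (Real.sqrt_pos.mpr h2)
    set sreq : ℝ := max 0 (M / (KK t₁ * A * ρ)) with hsreq
    set k : ℤ := ⌈(σ * sreq + θ) / (2 * Real.pi)⌉ with hk
    set s : ℝ := (2 * Real.pi * k - θ) / σ with hsdef
    have h2π : 0 < 2 * Real.pi := by have := Real.pi_pos; linarith
    have hks : (σ * sreq + θ) / (2 * Real.pi) ≤ (k : ℝ) := Int.le_ceil _
    have hge : σ * sreq + θ ≤ 2 * Real.pi * k := by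
      rw [div_le_iff₀ h2π] at hks; linarith
    have hs_ge : sreq ≤ s := by
      rw [hsdef, le_div_iff₀ hwim]; linarith
    have hs0 : (0 : ℝ) ≤ s := le_trans (le_max_left _ _) hs_ge
    set z : ℂ := ((Real.sqrt s : ℝ) : ℂ) with hz
    have hx2 : z.re ^ 2 = s := by
      rw [hz, Complex.ofReal_re, Real.sq_sqrt hs0]
    have hprod : CC t₁ c β * Complex.exp (ww t₁ c β * ((z.re : ℂ)) ^ 2)
        = ((A * Real.exp (ρ * s) : ℝ) : ℂ) := by
      have h1 : ((z.re : ℂ)) ^ 2 = ((s : ℝ) : ℂ) := by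
        rw [← Complex.ofReal_pow, hx2]
      have h2 : ww t₁ c β * ((s : ℝ) : ℂ)
          = ((ρ * s : ℝ) : ℂ) + ((σ * s : ℝ) : ℂ) * Complex.I := by
        rw [← Complex.re_add_im (ww t₁ c β), ← hρ, ← hσ]
        push_cast
        ring
      have h3 : CC t₁ c β = ((A : ℝ) : ℂ) * Complex.exp ((θ : ℝ) * Complex.I) :=
        (Complex.norm_mul_exp_arg_mul_I _).symm
      have hσs : σ * s = 2 * Real.pi * k - θ := by
        rw [hsdef]; field_simp
      have h4 : Complex.exp (((θ : ℝ) : ℂ) * Complex.I) *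
          Complex.exp (((σ * s : ℝ) : ℂ) * Complex.I) = 1 := by
        rw [← Complex.exp_add, hσs,
          show ((θ : ℝ) : ℂ) * Complex.I + (((2 * Real.pi * k - θ : ℝ)) : ℂ) * Complex.I
            = (k : ℂ) * (2 * (Real.pi : ℂ) * Complex.I) by push_cast; ring]
        exact Complex.exp_int_mul_two_pi_mul_I k
      rw [h1, h2, Complex.exp_add, h3]
      calc ((A : ℝ) : ℂ) * Complex.exp ((θ : ℝ) * Complex.I) *
            (Complex.exp (((ρ * s : ℝ) : ℂ)) * Complex.exp (((σ * s : ℝ) : ℂ) * Complex.I))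
          = ((A : ℝ) : ℂ) * Complex.exp (((ρ * s : ℝ) : ℂ)) *
            (Complex.exp (((θ : ℝ) : ℂ) * Complex.I) *
              Complex.exp (((σ * s : ℝ) : ℂ) * Complex.I)) := by ring
        _ = ((A : ℝ) : ℂ) * Complex.exp (((ρ * s : ℝ) : ℂ)) := by rw [h4, mul_one]
        _ = ((A * Real.exp (ρ * s) : ℝ) : ℂ) := by
            push_cast [Complex.ofReal_exp]
            ring
    have hval : heatTransform t₁ (gfun c β) z = KK t₁ * (A * Real.exp (ρ * s)) := by
      rw [heat_eval t₁ c β ht₁ hct₁ z, hprod, Complex.ofReal_re]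
    have hKAρ : 0 < KK t₁ * A * ρ := mul_pos (mul_pos hKpos hApos) hwre
    have h5 : M / (KK t₁ * A * ρ) ≤ s := le_trans (le_max_right _ _) hs_ge
    have h6 : M ≤ KK t₁ * A * ρ * s := by
      rw [div_le_iff₀ hKAρ] at h5; linarith
    have h7 : ρ * s + 1 ≤ Real.exp (ρ * s) := Real.add_one_le_exp _
    have h8 : M < KK t₁ * (A * Real.exp (ρ * s)) := by
      have e1 : KK t₁ * (A * (ρ * s + 1)) ≤ KK t₁ * (A * Real.exp (ρ * s)) :=
        mul_le_mul_of_nonneg_left (mul_le_mul_of_nonneg_left h7 hApos.le) hKpos.le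
      have e2 : KK t₁ * (A * (ρ * s + 1)) = KK t₁ * A * ρ * s + KK t₁ * A := by ring
      have e3 : 0 < KK t₁ * A := mul_pos hKpos hApos
      linarith
    have h9 := hM z
    rw [hval] at h9
    exact absurd (le_trans (le_abs_self _) h9) (not_le.mpr h8)
end
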